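/- arXiv:0902.4011 — 5 statements merged into one kernel-verified Lean document; each statement's English description precedes it below -/
import Mathlib

section
/- Let σ ∈ S_k and τ ∈ S_n with σ ≤ τ, and let ⟨σ⟩ be a fixed occurrence of σ in τ. If the pair (⟨σ⟩, τ) has an interval block, then the Möbius function of the occurrence poset [⟨σ⟩, τ] satisfies μ(⟨σ⟩, τ) = 0. -/
/-- `f` gives an occurrence of the pattern `σ` in `τ`: the positions `f 0 < f 1 < ⋯`
carry letters of `τ` in the same relative order as `σ`. -/
def IsOccurrence {k n : ℕ} (σ : Equiv.Perm (Fin k)) (τ : Equiv.Perm (Fin n))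
    (f : Fin k → Fin n) : Prop :=
  StrictMono f ∧ ∀ i j : Fin k, σ i < σ j ↔ τ (f i) < τ (f j)

/-- Two sets of kept positions `S, S'` (each containing the marked positions `A`)
determine the same element of the occurrence poset: the words of `τ` read along `S`
and along `S'` are order isomorphic, with the marked positions corresponding. -/
def OccEquiv {n : ℕ} (τ : Equiv.Perm (Fin n)) (A S S' : Finset (Fin n)) : Prop :=
  ∃ g : {x // x ∈ S} ≃o {x // x ∈ S'},
    (∀ a b : {x // x ∈ S}, τ a.1 < τ b.1 ↔ τ (g a).1 < τ (g b).1) ∧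
    (∀ a : {x // x ∈ S}, a.1 ∈ A ↔ (g a).1 ∈ A)

/-- Representatives of elements of the occurrence poset with marked positions `A`
and ground set `U`: sets of kept positions between `A` and `U`. -/
def OccCarrier {n : ℕ} (A U : Finset (Fin n)) := {S : Finset (Fin n) // A ⊆ S ∧ S ⊆ U}

/-- The occurrence poset `[⟨σ⟩, τ]` (with ground set `U`): kept-position sets modulo
order isomorphism respecting the marked occurrence. -/
def OccPoset {n : ℕ} (τ : Equiv.Perm (Fin n)) (A U : Finset (Fin n)) :=
  Quot (fun S S' : OccCarrier A U => OccEquiv τ A S.1 S'.1)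

def occMk {n : ℕ} (τ : Equiv.Perm (Fin n)) (A U : Finset (Fin n)) (S : OccCarrier A U) :
    OccPoset τ A U :=
  Quot.mk _ S

/-- The partial order of the occurrence poset: deletion of unmarked letters. -/
def occLE {n : ℕ} (τ : Equiv.Perm (Fin n)) (A U : Finset (Fin n))
    (q q' : OccPoset τ A U) : Prop :=
  ∃ S S' : OccCarrier A U, q = occMk τ A U S ∧ q' = occMk τ A U S' ∧ S.1 ⊆ S'.1

/-- The bottom element `⟨σ⟩` of the occurrence poset. -/
def occBot {n : ℕ} (τ : Equiv.Perm (Fin n)) (A U : Finset (Fin n)) (h : A ⊆ U) :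
    OccPoset τ A U :=
  occMk τ A U ⟨A, subset_rfl, h⟩

/-- The top element `τ` of the occurrence poset. -/
def occTop {n : ℕ} (τ : Equiv.Perm (Fin n)) (A U : Finset (Fin n)) (h : A ⊆ U) :
    OccPoset τ A U :=
  occMk τ A U ⟨U, h, subset_rfl⟩

/-- `J` is an interval block of the pattern of `τ` restricted to the kept positions `S`:
`J` consists of at least two kept positions, consecutive among `S` both in position and
in value. -/
def IsBlockIn {n : ℕ} (τ : Equiv.Perm (Fin n)) (S J : Finset (Fin n)) : Prop :=
  J ⊆ S ∧ 2 ≤ J.card ∧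
    (∀ x ∈ J, ∀ y ∈ J, ∀ z ∈ S, x ≤ z → z ≤ y → z ∈ J) ∧
    (∀ x ∈ J, ∀ y ∈ J, ∀ z ∈ S, τ x ≤ τ z → τ z ≤ τ y → z ∈ J)

/-- The pair (marked occurrence `A`, permutation given by kept positions `S`) has an
interval block: an interval block disjoint from the occurrence. -/
def PairHasBlock {n : ℕ} (τ : Equiv.Perm (Fin n)) (A S : Finset (Fin n)) : Prop :=
  ∃ J : Finset (Fin n), IsBlockIn τ S J ∧ ∀ p ∈ J, p ∉ A

/-- An element of the occurrence poset is interval free if (a representative of) it has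
no interval block disjoint from the marked occurrence. -/
def occIntervalFree {n : ℕ} (τ : Equiv.Perm (Fin n)) (A U : Finset (Fin n))
    (q : OccPoset τ A U) : Prop :=
  ∃ S : OccCarrier A U, q = occMk τ A U S ∧ ¬ PairHasBlock τ A S.1

theorem OccEquiv.card_eq {n : ℕ} {τ : Equiv.Perm (Fin n)} {A S S' : Finset (Fin n)}
    (h : OccEquiv τ A S S') : S.card = S'.card := by
  obtain ⟨g, -, -⟩ := h
  simpa using Fintype.card_congr g.toEquiv

/-- The rank of an element of the occurrence poset: its number of letters minus `k`. -/
def occRank {n : ℕ} (τ : Equiv.Perm (Fin n)) (A U : Finset (Fin n)) (k : ℕ) :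
    OccPoset τ A U → ℕ :=
  Quot.lift (fun S => S.1.card - k) (fun S S' h => by
    have hc := OccEquiv.card_eq h
    show S.1.card - k = S'.1.card - k
    omega)

/-- Positions `p` and `q` lie in the same region: no position between them (inclusive)
is a marked position. -/
def SameRegion {n : ℕ} (A : Finset (Fin n)) (p q : Fin n) : Prop :=
  ∀ z : Fin n, min p q ≤ z → z ≤ max p q → z ∉ A

/-- The pair (occurrence with marked positions `A`, `τ`) is separated: any two letters in
the same region are separated in value by a letter of the occurrence. -/
def Separated {n : ℕ} (τ : Equiv.Perm (Fin n)) (A : Finset (Fin n)) : Prop :=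
  ∀ p q : Fin n, SameRegion A p q → τ p < τ q → ∃ a ∈ A, τ p < τ a ∧ τ a < τ q

/-- The letters at positions `p, q` (with `τ p < τ q`) are similar: same region, and no
letter of the occurrence lies strictly between them in value. -/
def SimilarPos {n : ℕ} (τ : Equiv.Perm (Fin n)) (A : Finset (Fin n)) (p q : Fin n) : Prop :=
  SameRegion A p q ∧ τ p < τ q ∧ ∀ a ∈ A, ¬ (τ p < τ a ∧ τ a < τ q)

/-- A group of similar letters: at least two letters, pairwise similar. -/
def IsSimilarGroup {n : ℕ} (τ : Equiv.Perm (Fin n)) (A : Finset (Fin n))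
    (G : Finset (Fin n)) : Prop :=
  2 ≤ G.card ∧ ∀ p ∈ G, ∀ q ∈ G, τ p < τ q → SimilarPos τ A p q

/-- A maximal group of similar letters: one contained in no strictly larger group. -/
def IsMaxSimilarGroup {n : ℕ} (τ : Equiv.Perm (Fin n)) (A : Finset (Fin n))
    (G : Finset (Fin n)) : Prop :=
  IsSimilarGroup τ A G ∧ ∀ G' : Finset (Fin n), IsSimilarGroup τ A G' → G ⊆ G' → G' = G

/-- The occurrence poset is a boolean algebra: isomorphic to the poset of all subsets of
a finite set, ordered by inclusion. -/
def IsBooleanOccPoset {n : ℕ} (τ : Equiv.Perm (Fin n)) (A U : Finset (Fin n)) : Prop :=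
  ∃ (m : ℕ) (e : OccPoset τ A U ≃ Finset (Fin m)),
    ∀ q q' : OccPoset τ A U, occLE τ A U q q' ↔ e q ⊆ e q'

/-- The pattern poset `P`: permutations of every length, a permutation of length `m` being
an element of `Equiv.Perm (Fin m)` (its standard form). -/
def PatternPoset := Σ m : ℕ, Equiv.Perm (Fin m)

/-- The order of the pattern poset: pattern containment. -/
def patternLE (a b : PatternPoset) : Prop :=
  ∃ f : Fin a.1 → Fin b.1, IsOccurrence a.2 b.2 f

/-- `b` covers `a` in the pattern poset: `a < b` and `b` has one letter more than `a`. -/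
def patternCovers (a b : PatternPoset) : Prop :=
  patternLE a b ∧ a ≠ b ∧ b.1 = a.1 + 1

/-!
Choose two letters `j₀ ≠ j'` of an interval block `J` disjoint from the occurrence and let
`z = τ - j₀`, so that `⟨σ⟩ < z < τ`. An element `x < τ` is represented by a proper sub-word
`T` of `τ`. If `T` is interval free it meets `J` in at most one letter, and that letter may be
replaced by `j'` (the letters of `J` are indistinguishable from outside `J`), so `x ≤ z`.
Thus every `x ∈ [⟨σ⟩, τ)` not below `z` has an interval block, and by induction on its length
`μ(⟨σ⟩, x) = 0`; the remaining sum, over `[⟨σ⟩, z]`, vanishes by the recursion at `z`.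
-/

section OccEquiv

variable {n : ℕ} (τ : Equiv.Perm (Fin n)) (A : Finset (Fin n))

theorem occEquiv_refl (S : Finset (Fin n)) : OccEquiv τ A S S :=
  ⟨OrderIso.refl _, fun _ _ => Iff.rfl, fun _ => Iff.rfl⟩

variable {τ A}

theorem OccEquiv.symm {S S' : Finset (Fin n)} (h : OccEquiv τ A S S') : OccEquiv τ A S' S := by
  obtain ⟨g, hval, hmark⟩ := h
  refine ⟨g.symm, fun a b => ?_, fun a => ?_⟩
  · simpa only [g.apply_symm_apply] using (hval (g.symm a) (g.symm b)).symm
  · simpa only [g.apply_symm_apply] using (hmark (g.symm a)).symm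

theorem OccEquiv.trans {S₁ S₂ S₃ : Finset (Fin n)} (h : OccEquiv τ A S₁ S₂)
    (h' : OccEquiv τ A S₂ S₃) : OccEquiv τ A S₁ S₃ := by
  obtain ⟨g, hval, hmark⟩ := h
  obtain ⟨g', hval', hmark'⟩ := h'
  exact ⟨g.trans g', fun a b => (hval a b).trans (hval' (g a) (g b)),
    fun a => (hmark a).trans (hmark' (g a))⟩

structure IsOccMapOn (τ : Equiv.Perm (Fin n)) (A S : Finset (Fin n)) (φ : Fin n → Fin n) :
    Prop where
  lt_of_lt : ∀ a ∈ S, ∀ b ∈ S, a < b → φ a < φ b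
  val_lt_of_val_lt : ∀ a ∈ S, ∀ b ∈ S, τ a < τ b → τ (φ a) < τ (φ b)
  mem_iff : ∀ a ∈ S, a ∈ A ↔ φ a ∈ A

theorem IsOccMapOn.mono {S T : Finset (Fin n)} {φ : Fin n → Fin n} (h : IsOccMapOn τ A S φ)
    (hTS : T ⊆ S) : IsOccMapOn τ A T φ :=
  ⟨fun a ha b hb => h.lt_of_lt a (hTS ha) b (hTS hb),
    fun a ha b hb => h.val_lt_of_val_lt a (hTS ha) b (hTS hb), fun a ha => h.mem_iff a (hTS ha)⟩

theorem IsOccMapOn.occEquiv_image {S : Finset (Fin n)} {φ : Fin n → Fin n}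
    (h : IsOccMapOn τ A S φ) : OccEquiv τ A S (S.image φ) := by
  let e : {x // x ∈ S} → {x // x ∈ S.image φ} := fun a => ⟨φ a, Finset.mem_image_of_mem φ a.2⟩
  have he_mono : StrictMono e := fun a b hab => h.lt_of_lt a a.2 b b.2 hab
  have he_surj : Function.Surjective e := by
    rintro ⟨y, hy⟩
    obtain ⟨a, ha, rfl⟩ := Finset.mem_image.mp hy
    exact ⟨⟨a, ha⟩, rfl⟩
  refine ⟨he_mono.orderIsoOfSurjective e he_surj, fun a b => ?_, fun a => h.mem_iff a a.2⟩
  refine ⟨h.val_lt_of_val_lt a a.2 b b.2, fun hφ => ?_⟩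
  rcases lt_trichotomy (τ a.1) (τ b.1) with hab | hab | hab
  · exact hab
  · cases Subtype.ext (τ.injective hab)
    exact absurd hφ (lt_irrefl _)
  · exact absurd (h.val_lt_of_val_lt b b.2 a a.2 hab) hφ.asymm

theorem OccEquiv.exists_isOccMapOn {S S' : Finset (Fin n)} (h : OccEquiv τ A S S') :
    ∃ φ, IsOccMapOn τ A S φ ∧ S.image φ = S' := by
  obtain ⟨g, hval, hmark⟩ := h
  let φ : Fin n → Fin n := fun x => if hx : x ∈ S then (g ⟨x, hx⟩).1 else x
  have hφ : ∀ a : {x // x ∈ S}, φ a = (g a).1 := fun a => dif_pos a.2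
  refine ⟨φ, ⟨fun a ha b hb hab => ?_, fun a ha b hb hab => ?_, fun a ha => ?_⟩, ?_⟩
  · rw [hφ ⟨a, ha⟩, hφ ⟨b, hb⟩, Subtype.coe_lt_coe, g.lt_iff_lt]
    exact hab
  · simpa only [hφ ⟨a, ha⟩, hφ ⟨b, hb⟩] using (hval ⟨a, ha⟩ ⟨b, hb⟩).mp hab
  · simpa only [hφ ⟨a, ha⟩] using hmark ⟨a, ha⟩
  · ext y
    refine ⟨fun hy => ?_, fun hy => ?_⟩
    · obtain ⟨a, ha, rfl⟩ := Finset.mem_image.mp hy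
      exact (hφ ⟨a, ha⟩).symm ▸ (g ⟨a, ha⟩).2
    · refine Finset.mem_image.mpr ⟨g.symm ⟨y, hy⟩, (g.symm ⟨y, hy⟩).2, ?_⟩
      rw [hφ, g.apply_symm_apply]

theorem OccEquiv.exists_subset {Z W T : Finset (Fin n)} (h : OccEquiv τ A Z W)
    (hTZ : T ⊆ Z) (hAT : A ⊆ T) (hAW : A ⊆ W) :
    ∃ T' ⊆ W, A ⊆ T' ∧ OccEquiv τ A T T' := by
  obtain ⟨φ, hφ, rfl⟩ := h.exists_isOccMapOn
  refine ⟨T.image φ, Finset.image_subset_image hTZ, fun a ha => ?_,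
    (hφ.mono hTZ).occEquiv_image⟩
  obtain ⟨z, hz, rfl⟩ := Finset.mem_image.mp (hAW ha)
  exact Finset.mem_image_of_mem φ (hAT ((hφ.mem_iff z hz).mpr ha))

end OccEquiv

section Block

variable {n : ℕ} {τ : Equiv.Perm (Fin n)} {A S J T : Finset (Fin n)}

theorem IsBlockIn.inter (hJ : IsBlockIn τ S J) (hTS : T ⊆ S) (h2 : 2 ≤ (T ∩ J).card) :
    IsBlockIn τ T (T ∩ J) := by
  obtain ⟨-, -, hpos, hval⟩ := hJ
  refine ⟨Finset.inter_subset_left, h2, fun x hx y hy z hz hxz hzy => ?_,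
    fun x hx y hy z hz hxz hzy => ?_⟩
  · exact Finset.mem_inter.mpr ⟨hz, hpos x (Finset.mem_inter.mp hx).2 y
      (Finset.mem_inter.mp hy).2 z (hTS hz) hxz hzy⟩
  · exact Finset.mem_inter.mpr ⟨hz, hval x (Finset.mem_inter.mp hx).2 y
      (Finset.mem_inter.mp hy).2 z (hTS hz) hxz hzy⟩

theorem swap_lt_swap_of_convex {α : Type*} [LinearOrder α] {v : Fin n → α} {j j' : Fin n}
    (hconv : ∀ x ∈ J, ∀ y ∈ J, ∀ z ∈ S, v x ≤ v z → v z ≤ v y → z ∈ J) (hTS : T ⊆ S)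
    (hTJ : ∀ t ∈ T, t ∈ J → t = j) (hj : j ∈ J) (hj' : j' ∈ J) :
    ∀ a ∈ T, ∀ b ∈ T, v a < v b → v (Equiv.swap j j' a) < v (Equiv.swap j j' b) := by
  have hfix : ∀ t ∈ T, t ≠ j → Equiv.swap j j' t = t ∧ t ∉ J := fun t ht htj =>
    have htJ : t ∉ J := fun h => htj (hTJ t ht h)
    ⟨Equiv.swap_apply_of_ne_of_ne htj (ne_of_mem_of_not_mem hj' htJ).symm, htJ⟩
  intro a ha b hb hab
  by_cases haj : a = j <;> by_cases hbj : b = j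
  · exact absurd (haj.trans hbj.symm ▸ hab) (lt_irrefl _)
  · obtain ⟨hb_fix, hbJ⟩ := hfix b hb hbj
    subst haj
    rw [Equiv.swap_apply_left, hb_fix]
    by_contra h
    exact hbJ (hconv a hj j' hj' b (hTS hb) hab.le (not_lt.mp h))
  · obtain ⟨ha_fix, haJ⟩ := hfix a ha haj
    subst hbj
    rw [Equiv.swap_apply_left, ha_fix]
    by_contra h
    exact haJ (hconv j' hj' b hj a (hTS ha) (not_lt.mp h) hab.le)
  · rwa [(hfix a ha haj).1, (hfix b hb hbj).1]

theorem IsBlockIn.isOccMapOn_swap {j j' : Fin n} (hJ : IsBlockIn τ S J)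
    (hJA : ∀ p ∈ J, p ∉ A) (hTS : T ⊆ S) (hTJ : ∀ t ∈ T, t ∈ J → t = j) (hj : j ∈ J)
    (hj' : j' ∈ J) : IsOccMapOn τ A T (Equiv.swap j j') := by
  refine ⟨swap_lt_swap_of_convex (v := fun x => x) hJ.2.2.1 hTS hTJ hj hj',
    swap_lt_swap_of_convex hJ.2.2.2 hTS hTJ hj hj', fun a ha => ?_⟩
  by_cases haj : a = j
  · subst haj
    rw [Equiv.swap_apply_left]
    exact iff_of_false (hJA a hj) (hJA j' hj')
  · have haJ : a ∉ J := fun h => haj (hTJ a ha h)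
    rw [Equiv.swap_apply_of_ne_of_ne haj (ne_of_mem_of_not_mem hj' haJ).symm]

theorem IsBlockIn.exists_occEquiv_subset_erase {j₀ j' : Fin n}
    (hJ : IsBlockIn τ S J) (hJA : ∀ p ∈ J, p ∉ A) (hj₀ : j₀ ∈ J) (hj' : j' ∈ J)
    (hne : j₀ ≠ j') (hTS : T ⊆ S) (hAT : A ⊆ T) (hT : ¬ PairHasBlock τ A T) :
    ∃ T' ⊆ S.erase j₀, A ⊆ T' ∧ OccEquiv τ A T T' := by
  obtain hj₀T | hj₀T := em' (j₀ ∈ T)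
  · exact ⟨T, fun t ht => Finset.mem_erase.mpr ⟨ne_of_mem_of_not_mem ht hj₀T, hTS ht⟩, hAT,
      occEquiv_refl τ A T⟩
  have hcard : (T ∩ J).card ≤ 1 := by
    by_contra! h
    exact hT ⟨T ∩ J, hJ.inter hTS h, fun p hp => hJA p (Finset.mem_inter.mp hp).2⟩
  have hTJ : ∀ t ∈ T, t ∈ J → t = j₀ := fun t ht htJ =>
    Finset.card_le_one.mp hcard t (Finset.mem_inter.mpr ⟨ht, htJ⟩) j₀
      (Finset.mem_inter.mpr ⟨hj₀T, hj₀⟩)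
  refine ⟨T.image (Equiv.swap j₀ j'), fun y hy => ?_, fun a ha => ?_,
    (hJ.isOccMapOn_swap hJA hTS hTJ hj₀ hj').occEquiv_image⟩
  · obtain ⟨t, ht, rfl⟩ := Finset.mem_image.mp hy
    by_cases htj : t = j₀
    · rw [htj, Equiv.swap_apply_left]
      exact Finset.mem_erase.mpr ⟨hne.symm, hJ.1 hj'⟩
    · have ht' : t ≠ j' := fun h => htj (hTJ t ht (h ▸ hj'))
      rw [Equiv.swap_apply_of_ne_of_ne htj ht']
      exact Finset.mem_erase.mpr ⟨htj, hTS ht⟩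
  · have hfix : Equiv.swap j₀ j' a = a := Equiv.swap_apply_of_ne_of_ne
      (fun h => hJA j₀ hj₀ (h ▸ ha)) (fun h => hJA j' hj' (h ▸ ha))
    exact hfix ▸ Finset.mem_image_of_mem _ (hAT ha)

end Block

section OccPoset

variable {n : ℕ} {τ : Equiv.Perm (Fin n)} {A U : Finset (Fin n)}

instance : Finite (OccPoset τ A U) := by
  unfold OccPoset OccCarrier
  infer_instance

theorem occEquiv_of_occMk_eq {S S' : OccCarrier A U} (h : occMk τ A U S = occMk τ A U S') :
    OccEquiv τ A S.1 S'.1 :=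
  (Equivalence.eqvGen_iff (r := fun S S' : OccCarrier A U => OccEquiv τ A S.1 S'.1)
    ⟨fun S => occEquiv_refl τ A S.1, OccEquiv.symm, OccEquiv.trans⟩).mp (Quot.eqvGen_exact h)

theorem card_eq_of_occMk_eq {S S' : OccCarrier A U} (h : occMk τ A U S = occMk τ A U S') :
    S.1.card = S'.1.card :=
  (occEquiv_of_occMk_eq h).card_eq

theorem exists_subset_of_occLE_occMk {q : OccPoset τ A U} {S : OccCarrier A U}
    (h : occLE τ A U q (occMk τ A U S)) : ∃ T : OccCarrier A U, T.1 ⊆ S.1 ∧ q = occMk τ A U T := by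
  obtain ⟨T₀, S₀, rfl, hS, hT₀S₀⟩ := h
  obtain ⟨T, hTS, hAT, hT₀T⟩ := (occEquiv_of_occMk_eq hS).symm.exists_subset hT₀S₀ T₀.2.1 S.2.1
  exact ⟨⟨T, hAT, hTS.trans S.2.2⟩, hTS, Quot.sound hT₀T⟩

instance : PartialOrder (OccPoset τ A U) where
  le := occLE τ A U
  le_refl q := by
    obtain ⟨S, rfl⟩ := Quot.exists_rep q
    exact ⟨S, S, rfl, rfl, subset_rfl⟩
  le_trans q₁ q₂ q₃ h₁₂ h₂₃ := by
    obtain ⟨S₂, S₃, rfl, rfl, h⟩ := h₂₃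
    obtain ⟨T, hTS, rfl⟩ := exists_subset_of_occLE_occMk h₁₂
    exact ⟨T, S₃, rfl, rfl, hTS.trans h⟩
  le_antisymm q q' h h' := by
    obtain ⟨S, S', rfl, rfl, hSS'⟩ := h
    obtain ⟨T, hTS, hT⟩ := exists_subset_of_occLE_occMk h'
    have hcard : S'.1.card ≤ S.1.card := card_eq_of_occMk_eq hT ▸ Finset.card_le_card hTS
    rw [Subtype.ext (Finset.eq_of_subset_of_card_le hSS' hcard)]

theorem occMk_lt_occMk {S S' : OccCarrier A U} (h : S.1 ⊂ S'.1) :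
    occMk τ A U S < occMk τ A U S' :=
  lt_of_le_of_ne ⟨S, S', rfl, rfl, h.subset⟩
    fun h' => (Finset.card_lt_card h).ne (card_eq_of_occMk_eq h')

theorem exists_ssubset_of_lt_occMk {q : OccPoset τ A U} {S : OccCarrier A U}
    (h : q < occMk τ A U S) : ∃ T : OccCarrier A U, T.1 ⊂ S.1 ∧ q = occMk τ A U T := by
  obtain ⟨T, hTS, rfl⟩ := exists_subset_of_occLE_occMk h.le
  exact ⟨T, ssubset_of_subset_of_ne hTS fun hT => h.ne (congrArg _ (Subtype.ext hT)), rfl⟩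

end OccPoset

theorem mobius_eq_zero_of_vanishing_off_Iic {P : Type*} [PartialOrder P] [Finite P]
    {mu : P → P → ℤ} (hrec : ∀ a b, a < b → mu a b = -∑ᶠ x ∈ Set.Ico a b, mu a x)
    {a z b : P} (haz : a < z) (hzb : z < b)
    (hvanish : ∀ x ∈ Set.Ico a b, ¬ x ≤ z → mu a x = 0) : mu a b = 0 := by
  have hIcc : ∑ᶠ x ∈ Set.Icc a z, mu a x = 0 := by
    rw [← Set.Ico_insert_right haz.le, finsum_mem_insert _ Set.right_notMem_Ico (Set.toFinite _),
      hrec a z haz, neg_add_cancel]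
  have hrest : ∑ᶠ x ∈ Set.Ico a b \ Set.Icc a z, mu a x = 0 :=
    finsum_mem_of_eqOn_zero fun x hx => hvanish x hx.1 fun hxz => hx.2 ⟨hx.1.1, hxz⟩
  rw [hrec a b (haz.trans hzb), ← Set.union_sdiff_cancel (Set.Icc_subset_Ico_right hzb),
    finsum_mem_union Set.disjoint_sdiff_right (Set.toFinite _) (Set.toFinite _), hIcc, hrest,
    add_zero, neg_zero]

theorem mobius_occBot_occMk_eq_zero {n : ℕ} {τ : Equiv.Perm (Fin n)} {A U : Finset (Fin n)}
    (hAU : A ⊆ U) {mu : OccPoset τ A U → OccPoset τ A U → ℤ}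
    (hrec : ∀ a b, a < b → mu a b = -∑ᶠ x ∈ Set.Ico a b, mu a x)
    (S : OccCarrier A U) (hS : PairHasBlock τ A S.1) :
    mu (occBot τ A U hAU) (occMk τ A U S) = 0 := by
  induction hcard : S.1.card using Nat.strong_induction_on generalizing S with
  | _ m ih =>
  obtain ⟨J, hJ, hJA⟩ := hS
  obtain ⟨j₀, hj₀, j', hj', hne⟩ := Finset.one_lt_card.mp hJ.2.1
  have hAS : A ⊆ S.1.erase j₀ := fun a ha =>
    Finset.mem_erase.mpr ⟨fun h => hJA j₀ hj₀ (h ▸ ha), S.2.1 ha⟩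
  let Z : OccCarrier A U := ⟨S.1.erase j₀, hAS, (Finset.erase_subset _ _).trans S.2.2⟩
  have hAZ : A ⊂ Z.1 := Finset.ssubset_iff_subset_ne.mpr ⟨hAS, fun h =>
    hJA j' hj' (h ▸ Finset.mem_erase.mpr ⟨hne.symm, hJ.1 hj'⟩)⟩
  refine mobius_eq_zero_of_vanishing_off_Iic hrec (z := occMk τ A U Z) (occMk_lt_occMk hAZ)
    (occMk_lt_occMk (Finset.erase_ssubset (hJ.1 hj₀))) fun x hx hxZ => ?_
  obtain ⟨T, hTS, rfl⟩ := exists_ssubset_of_lt_occMk hx.2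
  by_cases hT : PairHasBlock τ A T.1
  · exact ih _ (hcard ▸ Finset.card_lt_card hTS) T hT rfl
  · obtain ⟨T', hT'Z, hAT', hTT'⟩ :=
      hJ.exists_occEquiv_subset_erase hJA hj₀ hj' hne hTS.subset T.2.1 hT
    exact absurd ⟨⟨T', hAT', hT'Z.trans Z.2.2⟩, Z, Quot.sound hTT', rfl, hT'Z⟩ hxZ

theorem mobius_occurrence_poset_interval_block_general {n : ℕ}
    (τ : Equiv.Perm (Fin n))
    (A : Finset (Fin n))
    (hblock : PairHasBlock τ A Finset.univ)
    (mu : OccPoset τ A Finset.univ → OccPoset τ A Finset.univ → ℤ)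
    (hrec : ∀ q q', occLE τ A Finset.univ q q' → q ≠ q' →
      mu q q' = - ∑ᶠ x ∈ {x : OccPoset τ A Finset.univ |
        occLE τ A Finset.univ q x ∧ occLE τ A Finset.univ x q' ∧ x ≠ q'}, mu q x) :
    mu (occBot τ A Finset.univ (Finset.subset_univ A))
      (occTop τ A Finset.univ (Finset.subset_univ A)) = 0 := by
  have hIco : ∀ q q' : OccPoset τ A Finset.univ,
      {x | occLE τ A Finset.univ q x ∧ occLE τ A Finset.univ x q' ∧ x ≠ q'} = Set.Ico q q' :=
    fun q q' => Set.ext fun x => and_congr_right fun _ => (lt_iff_le_and_ne (a := x)).symm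
  exact mobius_occBot_occMk_eq_zero (Finset.subset_univ A)
    (fun q q' h => hIco q q' ▸ hrec q q' h.le h.ne) ⟨Finset.univ, Finset.subset_univ A, subset_rfl⟩
    hblock

/-- if the pair `(⟨σ⟩, τ)` has an interval block then the Möbius function of
the occurrence poset `[⟨σ⟩, τ]` satisfies `μ(⟨σ⟩, τ) = 0`. -/
theorem mobius_occurrence_poset_interval_block {k n : ℕ}
    (σ : Equiv.Perm (Fin k)) (τ : Equiv.Perm (Fin n))
    (f : Fin k → Fin n) (hf : IsOccurrence σ τ f)
    (A : Finset (Fin n)) (hA : A = Finset.image f Finset.univ)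
    (hblock : PairHasBlock τ A Finset.univ)
    (mu : OccPoset τ A Finset.univ → OccPoset τ A Finset.univ → ℤ)
    (hone : ∀ q, mu q q = 1)
    (hzero : ∀ q q', ¬ occLE τ A Finset.univ q q' → mu q q' = 0)
    (hrec : ∀ q q', occLE τ A Finset.univ q q' → q ≠ q' →
      mu q q' = - ∑ᶠ x ∈ {x : OccPoset τ A Finset.univ |
        occLE τ A Finset.univ q x ∧ occLE τ A Finset.univ x q' ∧ x ≠ q'}, mu q x) :
    mu (occBot τ A Finset.univ (Finset.subset_univ A))
      (occTop τ A Finset.univ (Finset.subset_univ A)) = 0 :=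
  mobius_occurrence_poset_interval_block_general τ A hblock mu hrec
end

section
/- Let σ ∈ S_k and τ ∈ S_n with σ ≤ τ in the permutation pattern poset P. If the pair (σ, τ) has an interval block, i.e., τ has an interval block that is disjoint from every occurrence of σ in τ, then the Möbius function of the interval [σ, τ] in P satisfies μ(σ, τ) = 0. -/
/-!
By induction on the length of `τ`, `μ(σ, x) = 0` for every `x ∈ [σ, τ)` that itself has an
interval block avoiding the occurrences of `σ`. Any other `x ∈ [σ, τ)` has an occurrence in `τ`
meeting the block `J` of `τ` in at most one letter, and moving that letter to a fixed `j ∈ J`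
keeps it an occurrence, because `J` is an interval both in position and in value. So all these
`x` lie below the pattern `τ'` of `τ` on the positions outside `J` together with `j`, and
`σ < τ' < τ`. Hence the sum defining `μ(σ, τ)` equals the sum of `μ(σ, x)` over `[σ, τ']`,
which vanishes.
-/

open Finset

namespace Set.OrdConnected

variable {α : Type*} [LinearOrder α] {s : Set α}

theorem lt_iff_lt_of_mem_of_notMem {a b c : α} (hs : s.OrdConnected) (ha : a ∈ s) (hb : b ∈ s)
    (hc : c ∉ s) : c < a ↔ c < b := by
  suffices ∀ {a b}, a ∈ s → b ∈ s → c < a → c < b from ⟨this ha hb, this hb ha⟩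
  intro a b ha hb hca
  by_contra! hbc
  exact hc (hs.out hb ha ⟨hbc, hca.le⟩)

theorem lt_iff_lt_of_mem_of_notMem' {a b c : α} (hs : s.OrdConnected) (ha : a ∈ s) (hb : b ∈ s)
    (hc : c ∉ s) : a < c ↔ b < c := by
  suffices ∀ {a b}, a ∈ s → b ∈ s → a < c → b < c from ⟨this ha hb, this hb ha⟩
  intro a b ha hb hac
  by_contra! hcb
  exact hc (hs.out ha hb ⟨hac.le, hcb⟩)

/-- Moving letters inside an order-connected set `s` does not change their comparisons with
letters outside `s`. -/
theorem lt_iff_lt_of_eq_or_mem {p q p' q' : α} (hs : s.OrdConnected) (hpq : ¬(p ∈ s ∧ q ∈ s))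
    (hp : p' = p ∨ p ∈ s ∧ p' ∈ s) (hq : q' = q ∨ q ∈ s ∧ q' ∈ s) : p < q ↔ p' < q' := by
  rcases hp with rfl | ⟨hp, hp'⟩ <;> rcases hq with rfl | ⟨hq, hq'⟩
  · rfl
  · exact hs.lt_iff_lt_of_mem_of_notMem hq hq' fun hp => hpq ⟨hp, hq⟩
  · exact hs.lt_iff_lt_of_mem_of_notMem' hp hp' fun hq => hpq ⟨hp, hq⟩
  · exact absurd ⟨hp, hq⟩ hpq

end Set.OrdConnected

noncomputable def standardize {m : ℕ} {α : Type*} [LinearOrder α] (w : Fin m → α) :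
    Equiv.Perm (Fin m) :=
  (Tuple.sort w).symm

theorem standardize_lt_standardize_iff {m : ℕ} {α : Type*} [LinearOrder α] {w : Fin m → α}
    (hw : Function.Injective w) (i j : Fin m) :
    standardize w i < standardize w j ↔ w i < w j := by
  have hsorted : StrictMono (w ∘ Tuple.sort w) :=
    (Tuple.monotone_sort w).strictMono_of_injective (hw.comp (Tuple.sort w).injective)
  simpa [standardize] using
    (hsorted.lt_iff_lt (a := (Tuple.sort w).symm i) (b := (Tuple.sort w).symm j)).symm

section Occurrence

variable {k m n : ℕ} {σ : Equiv.Perm (Fin k)} {ξ : Equiv.Perm (Fin m)} {τ : Equiv.Perm (Fin n)}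

theorem IsOccurrence.comp {f : Fin k → Fin m} {g : Fin m → Fin n} (hg : IsOccurrence ξ τ g)
    (hf : IsOccurrence σ ξ f) : IsOccurrence σ τ (g ∘ f) :=
  ⟨hg.1.comp hf.1, fun i j => (hf.2 i j).trans (hg.2 _ _)⟩

theorem IsOccurrence.le_iff_le {g : Fin m → Fin n} (hg : IsOccurrence ξ τ g) (i j : Fin m) :
    ξ i ≤ ξ j ↔ τ (g i) ≤ τ (g j) := by
  simpa only [not_lt] using (hg.2 j i).not

theorem IsOccurrence.eq_of_same_length {ξ' : Equiv.Perm (Fin m)} {g : Fin m → Fin m}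
    (hg : IsOccurrence ξ ξ' g) : ξ = ξ' := by
  have hg_id : g = id := hg.1.eq_id
  have hmono : StrictMono (ξ' ∘ ξ.symm) := fun u v huv => by
    simpa [hg_id] using (hg.2 (ξ.symm u) (ξ.symm v)).1 (by simpa using huv)
  ext i
  simpa using congrArg Fin.val (hmono.apply_eq (x := ξ i)).symm

end Occurrence

namespace PatternPoset

theorem fst_le_of_patternLE {a b : PatternPoset} (h : patternLE a b) : a.1 ≤ b.1 := by
  obtain ⟨f, hf⟩ := h
  simpa using Fintype.card_le_of_injective f hf.1.injective

theorem eq_of_patternLE_of_fst_eq {a b : PatternPoset} (h : patternLE a b) (hlen : a.1 = b.1) :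
    a = b := by
  obtain ⟨m, ξ⟩ := a
  obtain ⟨n, τ⟩ := b
  obtain rfl : m = n := hlen
  obtain ⟨f, hf⟩ := h
  cases hf.eq_of_same_length
  rfl

instance : PartialOrder PatternPoset where
  le := patternLE
  le_refl _ := ⟨id, strictMono_id, fun _ _ => Iff.rfl⟩
  le_trans _ _ _ := fun ⟨f, hf⟩ ⟨g, hg⟩ => ⟨g ∘ f, hg.comp hf⟩
  le_antisymm _ _ hab hba :=
    eq_of_patternLE_of_fst_eq hab (le_antisymm (fst_le_of_patternLE hab) (fst_le_of_patternLE hba))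

theorem lt_of_le_of_fst_lt {a b : PatternPoset} (h : a ≤ b) (hlen : a.1 < b.1) : a < b :=
  lt_of_le_of_ne h fun hab => hlen.ne (congrArg Sigma.fst hab)

theorem fst_lt_of_lt {a b : PatternPoset} (h : a < b) : a.1 < b.1 :=
  (fst_le_of_patternLE h.le).lt_of_ne fun hlen => h.ne (eq_of_patternLE_of_fst_eq h.le hlen)

theorem finite_Iic (b : PatternPoset) : (Set.Iic b).Finite :=
  (Set.finite_range fun p : Σ m : Fin (b.1 + 1), Equiv.Perm (Fin m) =>
    (⟨p.1, p.2⟩ : PatternPoset)).subset fun ⟨m, ξ⟩ h =>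
      ⟨⟨⟨m, Nat.lt_succ_of_le (fst_le_of_patternLE h)⟩, ξ⟩, rfl⟩

end PatternPoset

section Restriction

variable {m n : ℕ} (τ : Equiv.Perm (Fin n)) (S : Finset (Fin n))

noncomputable def patternAt : PatternPoset :=
  ⟨#S, standardize (τ ∘ S.orderEmbOfFin rfl)⟩

theorem patternAt_patternLE : patternLE (patternAt τ S) ⟨n, τ⟩ :=
  ⟨S.orderEmbOfFin rfl, (S.orderEmbOfFin rfl).strictMono,
    standardize_lt_standardize_iff (τ.injective.comp (S.orderEmbOfFin rfl).injective)⟩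

variable {τ S}

theorem patternLE_patternAt {ξ : Equiv.Perm (Fin m)} {g : Fin m → Fin n} (hg : IsOccurrence ξ τ g)
    (hS : ∀ i, g i ∈ S) : patternLE ⟨m, ξ⟩ (patternAt τ S) := by
  let e := S.orderIsoOfFin rfl
  have he : ∀ i, S.orderEmbOfFin rfl (e.symm ⟨g i, hS i⟩) = g i := fun i => by
    rw [← S.coe_orderIsoOfFin_apply, OrderIso.apply_symm_apply]
  refine ⟨fun i => e.symm ⟨g i, hS i⟩, fun i j hij => ?_, fun i j => ?_⟩
  · exact e.symm.lt_iff_lt.2 (Subtype.mk_lt_mk.2 (hg.1 hij))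
  · have h := standardize_lt_standardize_iff (τ.injective.comp (S.orderEmbOfFin rfl).injective)
      (e.symm ⟨g i, hS i⟩) (e.symm ⟨g j, hS j⟩)
    simp only [Function.comp_apply, he] at h
    exact (hg.2 i j).trans h.symm

end Restriction

section Block

variable {k m n : ℕ} {σ : Equiv.Perm (Fin k)} {ξ : Equiv.Perm (Fin m)}
  {τ : Equiv.Perm (Fin n)} {J : Finset (Fin n)}

def HasBlockAvoiding (σ : Equiv.Perm (Fin k)) (τ : Equiv.Perm (Fin n)) : Prop :=
  ∃ J : Finset (Fin n), IsBlockIn τ univ J ∧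
    ∀ f : Fin k → Fin n, IsOccurrence σ τ f → ∀ i : Fin k, f i ∉ J

theorem IsBlockIn.ordConnected_positions (hJ : IsBlockIn τ univ J) :
    (J : Set (Fin n)).OrdConnected :=
  ⟨fun x hx y hy z hz => hJ.2.2.1 x hx y hy z (mem_univ z) hz.1 hz.2⟩

theorem IsBlockIn.ordConnected_values (hJ : IsBlockIn τ univ J) :
    {v | τ.symm v ∈ J}.OrdConnected :=
  ⟨fun x hx y hy z hz => hJ.2.2.2 _ hx _ hy (τ.symm z) (mem_univ _)
    (by simpa using hz.1) (by simpa using hz.2)⟩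

theorem IsBlockIn.preimage {g : Fin m → Fin n} (hJ : IsBlockIn τ univ J)
    (hg : IsOccurrence ξ τ g) (hcard : 2 ≤ #{i | g i ∈ J}) :
    IsBlockIn ξ univ {i | g i ∈ J} := by
  refine ⟨subset_univ _, hcard, fun x hx y hy z _ hxz hzy => ?_, fun x hx y hy z _ hxz hzy => ?_⟩
  all_goals simp only [mem_filter, mem_univ, true_and] at hx hy ⊢
  · exact hJ.2.2.1 _ hx _ hy _ (mem_univ _) (hg.1.monotone hxz) (hg.1.monotone hzy)
  · exact hJ.2.2.2 _ hx _ hy _ (mem_univ _) ((hg.le_iff_le x z).1 hxz) ((hg.le_iff_le z y).1 hzy)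

theorem hasBlockAvoiding_of_occurrence {g : Fin m → Fin n} (hg : IsOccurrence ξ τ g)
    (hJ : IsBlockIn τ univ J) (hJσ : ∀ f : Fin k → Fin n, IsOccurrence σ τ f → ∀ i, f i ∉ J)
    (hcard : 2 ≤ #{i | g i ∈ J}) : HasBlockAvoiding σ ξ :=
  ⟨_, hJ.preimage hg hcard, fun f hf i hi => hJσ (g ∘ f) (hg.comp hf) i (mem_filter.1 hi).2⟩

theorem IsOccurrence.collapse {g : Fin m → Fin n} {j : Fin n} (hg : IsOccurrence ξ τ g)
    (hJ : IsBlockIn τ univ J) (hj : j ∈ J) (hinj : ∀ i i', g i ∈ J → g i' ∈ J → i = i') :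
    IsOccurrence ξ τ (fun i => if g i ∈ J then j else g i) := by
  set g' : Fin m → Fin n := fun i => if g i ∈ J then j else g i
  have hg' : ∀ i, g' i = g i ∨ g i ∈ J ∧ g' i ∈ J := fun i => by
    by_cases h : g i ∈ J <;> simp [g', h, hj]
  have hsep : ∀ {i i'}, i ≠ i' → ¬(g i ∈ J ∧ g i' ∈ J) := fun hne h => hne (hinj _ _ h.1 h.2)
  have hval : ∀ i, τ (g' i) = τ (g i) ∨
      τ (g i) ∈ {v | τ.symm v ∈ J} ∧ τ (g' i) ∈ {v | τ.symm v ∈ J} :=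
    fun i => (hg' i).imp (congrArg τ) (by simp)
  refine ⟨fun i i' hlt => ?_, fun i i' => ?_⟩
  · exact (hJ.ordConnected_positions.lt_iff_lt_of_eq_or_mem (by simpa using hsep hlt.ne)
      (hg' i) (hg' i')).1 (hg.1 hlt)
  · rcases eq_or_ne i i' with rfl | hne
    · simp
    rw [hg.2, hJ.ordConnected_values.lt_iff_lt_of_eq_or_mem (by simpa using hsep hne)
      (hval i) (hval i')]

theorem patternLE_patternAt_insert_compl {j : Fin n} (hJ : IsBlockIn τ univ J)
    (hJσ : ∀ f : Fin k → Fin n, IsOccurrence σ τ f → ∀ i, f i ∉ J) (hj : j ∈ J)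
    (hξτ : patternLE ⟨m, ξ⟩ ⟨n, τ⟩) (hξ : ¬HasBlockAvoiding σ ξ) :
    patternLE ⟨m, ξ⟩ (patternAt τ (insert j Jᶜ)) := by
  obtain ⟨g, hg⟩ := hξτ
  have hinj : ∀ i i', g i ∈ J → g i' ∈ J → i = i' := by
    have hcard : #{i | g i ∈ J} ≤ 1 :=
      Nat.le_of_lt_succ (not_le.1 fun h => hξ (hasBlockAvoiding_of_occurrence hg hJ hJσ h))
    exact fun i i' hi hi' =>
      Finset.card_le_one.1 hcard i (by simpa using hi) i' (by simpa using hi')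
  refine patternLE_patternAt (hg.collapse hJ hj hinj) fun i => ?_
  by_cases h : g i ∈ J <;> simp [h]

end Block

theorem mobius_eq_zero_of_support_le {α : Type*} [PartialOrder α] (mu : α → α → ℤ)
    (hrec : ∀ a b, a < b → mu a b = -∑ᶠ x ∈ Set.Ico a b, mu a x) {a b c : α}
    (hac : a < c) (hcb : c < b) (hfin : (Set.Ico a c).Finite)
    (hsupp : ∀ x ∈ Set.Ico a b, mu a x ≠ 0 → x ≤ c) : mu a b = 0 := by
  have hsupp_eq : Set.Ico a b ∩ Function.support (mu a) =
      Set.Icc a c ∩ Function.support (mu a) := by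
    ext x
    simp only [Set.mem_inter_iff, Function.mem_support]
    exact ⟨fun ⟨hx, hmu⟩ => ⟨⟨hx.1, hsupp x hx hmu⟩, hmu⟩,
      fun ⟨hx, hmu⟩ => ⟨⟨hx.1, hx.2.trans_lt hcb⟩, hmu⟩⟩
  calc mu a b = -∑ᶠ x ∈ Set.Icc a c, mu a x := by
        rw [hrec a b (hac.trans hcb), ← finsum_mem_inter_support, hsupp_eq,
          finsum_mem_inter_support]
    _ = -(mu a c + ∑ᶠ x ∈ Set.Ico a c, mu a x) := by
        rw [← Set.Ico_insert_right hac.le, finsum_mem_insert _ (by simp) hfin]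
    _ = 0 := by rw [hrec a c hac]; ring

theorem mobius_eq_zero_of_hasBlockAvoiding (mu : PatternPoset → PatternPoset → ℤ)
    (hrec : ∀ a b : PatternPoset, a < b → mu a b = -∑ᶠ x ∈ Set.Ico a b, mu a x)
    {k : ℕ} (σ : Equiv.Perm (Fin k)) {n : ℕ} (τ : Equiv.Perm (Fin n))
    (hστ : patternLE ⟨k, σ⟩ ⟨n, τ⟩) (hblock : HasBlockAvoiding σ τ) :
    mu ⟨k, σ⟩ ⟨n, τ⟩ = 0 := by
  induction n using Nat.strong_induction_on with
  | _ n ih =>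
    obtain ⟨J, hJ, hJσ⟩ := hblock
    obtain ⟨j, hj⟩ : J.Nonempty := card_pos.1 (by linarith [hJ.2.1])
    obtain ⟨f, hf⟩ := hστ
    have hk : k ≤ #Jᶜ := by
      simpa using card_le_card_of_injOn (s := univ) f (fun i _ => mem_compl.2 (hJσ f hf i))
        hf.1.injective.injOn
    have hcard : #(insert j Jᶜ) = #Jᶜ + 1 := card_insert_of_notMem (by simpa using hj)
    have hcompl : #Jᶜ + #J = n := by simp
    refine mobius_eq_zero_of_support_le mu hrec (c := patternAt τ (insert j Jᶜ)) ?_ ?_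
      ((PatternPoset.finite_Iic _).subset
        (Set.Ico_subset_Iio_self.trans Set.Iio_subset_Iic_self)) ?_
    · refine PatternPoset.lt_of_le_of_fst_lt (patternLE_patternAt hf fun i => ?_) ?_
      · simpa using Or.inr (hJσ f hf i)
      · change k < #(insert j Jᶜ)
        omega
    · refine PatternPoset.lt_of_le_of_fst_lt (patternAt_patternLE τ _) ?_
      change #(insert j Jᶜ) < n
      linarith [hJ.2.1]
    · rintro ⟨m, ξ⟩ ⟨hσξ, hξτ⟩ hmu
      exact patternLE_patternAt_insert_compl hJ hJσ hj hξτ.le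
        fun hξ => hmu (ih m (PatternPoset.fst_lt_of_lt hξτ) ξ hσξ hξ)

theorem mobius_pattern_poset_interval_block_general {k n : ℕ}
    (σ : Equiv.Perm (Fin k)) (τ : Equiv.Perm (Fin n))
    (hle : patternLE ⟨k, σ⟩ ⟨n, τ⟩)
    (hblock : ∃ J : Finset (Fin n), IsBlockIn τ Finset.univ J ∧
      ∀ f : Fin k → Fin n, IsOccurrence σ τ f → ∀ i : Fin k, f i ∉ J)
    (mu : PatternPoset → PatternPoset → ℤ)
    (hrec : ∀ a b, patternLE a b → a ≠ b →
      mu a b = - ∑ᶠ x ∈ {x : PatternPoset | patternLE a x ∧ patternLE x b ∧ x ≠ b}, mu a x) :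
    mu ⟨k, σ⟩ ⟨n, τ⟩ = 0 := by
  refine mobius_eq_zero_of_hasBlockAvoiding mu (fun a b hab => ?_) σ τ hle hblock
  have hIco : {x | patternLE a x ∧ patternLE x b ∧ x ≠ b} = Set.Ico a b :=
    Set.ext fun x => and_congr_right fun _ => (lt_iff_le_and_ne (a := x) (b := b)).symm
  rw [hrec a b hab.le hab.ne, hIco]

/-- if the pair `(σ, τ)` has an interval block (an interval block of `τ`
disjoint from every occurrence of `σ` in `τ`), then `μ(σ, τ) = 0` in the pattern poset. -/
theorem mobius_pattern_poset_interval_block {k n : ℕ} (hk : 0 < k)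
    (σ : Equiv.Perm (Fin k)) (τ : Equiv.Perm (Fin n))
    (hle : patternLE ⟨k, σ⟩ ⟨n, τ⟩)
    (hblock : ∃ J : Finset (Fin n), IsBlockIn τ Finset.univ J ∧
      ∀ f : Fin k → Fin n, IsOccurrence σ τ f → ∀ i : Fin k, f i ∉ J)
    (mu : PatternPoset → PatternPoset → ℤ)
    (hone : ∀ a, mu a a = 1)
    (hzero : ∀ a b, ¬ patternLE a b → mu a b = 0)
    (hrec : ∀ a b, patternLE a b → a ≠ b →
      mu a b = - ∑ᶠ x ∈ {x : PatternPoset | patternLE a x ∧ patternLE x b ∧ x ≠ b}, mu a x) :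
    mu ⟨k, σ⟩ ⟨n, τ⟩ = 0 :=
  mobius_pattern_poset_interval_block_general σ τ hle hblock mu hrec
end

section
/- Let σ ∈ S_k and τ ∈ S_n with σ ≤ τ in the permutation pattern poset, and suppose n − k = 2. If the pair (σ, τ) has an interval block, then (σ, τ) has exactly one interval block I, which has two elements, and the interval [σ, τ] is a three-element chain whose middle element is obtained from τ by removing one of the two letters of I. -/
/-! The two letters of `τ` outside an occurrence of `σ` are the only candidates for a block
avoiding every occurrence, so the block is that pair `{p, q}`, with adjacent positions and
adjacent values. Deleting either of the two letters then gives the same permutation `ρ`. A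
permutation strictly between `σ` and `τ` is `τ` with one letter deleted, and the composite
occurrence of `σ` in `τ` misses that letter, so it is `p` or `q` and the permutation is `ρ`. -/

open Equiv Finset

lemma Fin.succAbove_eq_swap_of_covBy {m : ℕ} {p q : Fin (m + 1)} (hpq : p ⋖ q) (i : Fin m) :
    q.succAbove i = swap p q (p.succAbove i) := by
  rw [Fin.covBy_iff, Nat.covBy_iff_add_one_eq] at hpq
  rw [swap_apply_def]
  simp only [Fin.succAbove]
  split_ifs <;> simp only [Fin.ext_iff, Fin.lt_def, Fin.val_castSucc, Fin.val_succ] at * <;>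
    omega

lemma Fin.exists_eq_succAbove_of_strictMono {m : ℕ} {v : Fin m → Fin (m + 1)}
    (hv : StrictMono v) : ∃ r : Fin (m + 1), v = r.succAbove := by
  obtain ⟨r, hr⟩ : ∃ r, ∀ i, v i ≠ r := by
    by_contra! h
    simpa using Fintype.card_le_of_surjective v h
  choose w hw using fun i => Fin.exists_succAbove_eq (hr i)
  have hw_mono : StrictMono w := fun i j hij =>
    Fin.succAbove_lt_succAbove_iff.1 (by rw [hw, hw]; exact hv hij)
  exact ⟨r, funext fun i => by rw [← hw i, hw_mono.apply_eq]⟩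

lemma Equiv.Perm.lt_iff_swap_lt_swap_of_covBy {m : ℕ} (τ : Perm (Fin m)) {p q a b : Fin m}
    (hv : τ p ⋖ τ q ∨ τ q ⋖ τ p) (ha : a ≠ p) (hb : b ≠ p) :
    τ a < τ b ↔ τ (swap p q a) < τ (swap p q b) := by
  have hinj : ∀ x y, x ≠ y → (τ x : ℕ) ≠ τ y := fun x y h =>
    Fin.val_injective.ne (τ.injective.ne h)
  simp only [Fin.covBy_iff, Nat.covBy_iff_add_one_eq] at hv
  rw [swap_apply_def, swap_apply_def]
  have hap := hinj a p ha
  have hbp := hinj b p hb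
  split_ifs <;> subst_vars <;> simp only [Fin.lt_def] <;> grind

lemma Equiv.Perm.eq_of_lt_iff_lt {m : ℕ} {π ρ : Perm (Fin m)}
    (h : ∀ i j, π i < π j ↔ ρ i < ρ j) : π = ρ := by
  have hmono : StrictMono (π ∘ ρ.symm) := fun a b hab => (h _ _).2 (by simpa using hab)
  ext x
  simpa using congrArg Fin.val (hmono.apply_eq (x := ρ x))

lemma Finset.card_compl_image_of_injective {k n : ℕ} {f : Fin k → Fin n}
    (hf : Function.Injective f) : #(univ.image f)ᶜ = n - k := by
  rw [card_compl, card_image_of_injective _ hf, card_univ, Fintype.card_fin, Fintype.card_fin]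

lemma Finset.compl_image_eq_of_forall_notMem {k n : ℕ} {f : Fin k → Fin n}
    (hf : Function.Injective f) {J : Finset (Fin n)} (hJ : ∀ i, f i ∉ J)
    (hcard : n ≤ k + #J) :
    (univ.image f)ᶜ = J := by
  refine (eq_of_subset_of_card_le (fun x hx => ?_) ?_).symm
  · simp only [mem_compl, mem_image, mem_univ, true_and, not_exists]
    rintro i rfl
    exact hJ i hx
  · rw [card_compl_image_of_injective hf]
    omega

/-- `finSuccEquiv' p` identifies `Fin (m + 1)` with `Option (Fin m)`, sending `p` to `none`;
conjugating `τ` by these identifications fixes `none`, and `removeNone` forgets it. -/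
def eraseLetter {m : ℕ} (τ : Perm (Fin (m + 1))) (p : Fin (m + 1)) : Perm (Fin m) :=
  removeNone ((finSuccEquiv' p).symm.trans (τ.trans (finSuccEquiv' (τ p))))

lemma succAbove_eraseLetter {m : ℕ} (τ : Perm (Fin (m + 1))) (p : Fin (m + 1)) (i : Fin m) :
    (τ p).succAbove (eraseLetter τ p i) = τ (p.succAbove i) := by
  obtain ⟨y, hy⟩ := Fin.exists_succAbove_eq (τ.injective.ne (p.succAbove_ne i))
  have := removeNone_some ((finSuccEquiv' p).symm.trans (τ.trans (finSuccEquiv' (τ p))))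
    (x := i) ⟨y, by simp [← hy]⟩
  simp only [trans_apply, finSuccEquiv'_symm_some, ← hy, finSuccEquiv'_succAbove,
    Option.some_inj] at this
  rwa [eraseLetter, this]

section Occurrence

variable {k m n : ℕ} {σ : Perm (Fin k)} {ρ : Perm (Fin m)} {τ : Perm (Fin n)}

lemma IsOccurrence.trans {f : Fin k → Fin m} {g : Fin m → Fin n} (hf : IsOccurrence σ ρ f)
    (hg : IsOccurrence ρ τ g) : IsOccurrence σ τ (g ∘ f) :=
  ⟨hg.1.comp hf.1, fun i j => (hf.2 i j).trans (hg.2 (f i) (f j))⟩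

lemma IsOccurrence.perm_eq {π : Perm (Fin m)} {g : Fin m → Fin n} (hρ : IsOccurrence ρ τ g)
    (hπ : IsOccurrence π τ g) : ρ = π :=
  Perm.eq_of_lt_iff_lt fun i j => (hρ.2 i j).trans (hπ.2 i j).symm

lemma IsOccurrence.eq {π : Perm (Fin k)} {f : Fin k → Fin k} (hf : IsOccurrence σ π f) :
    σ = π := by
  obtain rfl := hf.1.eq_id
  exact hf.perm_eq ⟨strictMono_id, fun _ _ => Iff.rfl⟩

lemma IsOccurrence.patternLE_of_forall_exists {f : Fin k → Fin n} {g : Fin m → Fin n}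
    (hf : IsOccurrence σ τ f) (hg : IsOccurrence ρ τ g) (h : ∀ i, ∃ j, g j = f i) :
    patternLE ⟨k, σ⟩ ⟨m, ρ⟩ := by
  choose w hw using h
  refine ⟨w, fun i j hij => hg.1.lt_iff_lt.1 (by rw [hw, hw]; exact hf.1 hij), fun i j => ?_⟩
  rw [hf.2, ← hw, ← hw, ← hg.2]

lemma isOccurrence_eraseLetter (τ : Perm (Fin (n + 1))) (p : Fin (n + 1)) :
    IsOccurrence (eraseLetter τ p) τ p.succAbove :=
  ⟨Fin.strictMono_succAbove p, fun i j => by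
    rw [← succAbove_eraseLetter, ← succAbove_eraseLetter, Fin.succAbove_lt_succAbove_iff]⟩

lemma IsOccurrence.patternLE_eraseLetter {τ : Perm (Fin (n + 1))} {f : Fin k → Fin (n + 1)}
    (hf : IsOccurrence σ τ f) {p : Fin (n + 1)} (hp : ∀ i, f i ≠ p) :
    patternLE ⟨k, σ⟩ ⟨n, eraseLetter τ p⟩ :=
  hf.patternLE_of_forall_exists (isOccurrence_eraseLetter τ p)
    fun i => Fin.exists_succAbove_eq (hp i)

end Occurrence

lemma eraseLetter_eq_of_covBy {m : ℕ} {τ : Perm (Fin (m + 1))} {p q : Fin (m + 1)}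
    (hpq : p ⋖ q) (hv : τ p ⋖ τ q ∨ τ q ⋖ τ p) :
    eraseLetter τ q = eraseLetter τ p := by
  refine (isOccurrence_eraseLetter τ q).perm_eq ⟨Fin.strictMono_succAbove q, fun i j => ?_⟩
  rw [Fin.succAbove_eq_swap_of_covBy hpq, Fin.succAbove_eq_swap_of_covBy hpq,
    ← τ.lt_iff_swap_lt_swap_of_covBy hv (p.succAbove_ne i) (p.succAbove_ne j)]
  exact (isOccurrence_eraseLetter τ p).2 i j

lemma IsBlockIn.covBy_of_eq_pair {n : ℕ} {τ : Perm (Fin n)} {x y : Fin n}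
    (h : IsBlockIn τ univ {x, y}) : (x < y → x ⋖ y) ∧ (τ x < τ y → τ x ⋖ τ y) := by
  obtain ⟨-, -, hpos, hval⟩ := h
  refine ⟨fun hxy => ⟨hxy, fun z hxz hzy => ?_⟩, fun hxy => ⟨hxy, fun c hxc hcy => ?_⟩⟩
  · have := hpos x (by simp) y (by simp) z (mem_univ z) hxz.le hzy.le
    simp only [mem_insert, mem_singleton] at this
    rcases this with rfl | rfl
    exacts [lt_irrefl _ hxz, lt_irrefl _ hzy]
  · have := hval x (by simp) y (by simp) (τ.symm c) (mem_univ _) (by simpa using hxc.le)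
      (by simpa using hcy.le)
    simp only [mem_insert, mem_singleton] at this
    rcases this with rfl | rfl <;> simp at hxc hcy

lemma PatternPoset.ne_of_length_ne {a b : PatternPoset} (h : a.1 ≠ b.1) : a ≠ b :=
  mt (congrArg Sigma.fst) h

lemma patternLE_refl (a : PatternPoset) : patternLE a a :=
  ⟨id, strictMono_id, fun _ _ => Iff.rfl⟩

theorem patternInterval_eq_of_covBy {k : ℕ} {σ : Perm (Fin k)} {τ : Perm (Fin (k + 2))}
    (hστ : patternLE ⟨k, σ⟩ ⟨k + 2, τ⟩) {p q : Fin (k + 2)} (hpq : p ⋖ q)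
    (hv : τ p ⋖ τ q ∨ τ q ⋖ τ p)
    (havoid : ∀ f, IsOccurrence σ τ f → ∀ i, f i ∉ ({p, q} : Finset (Fin (k + 2)))) :
    {x | patternLE ⟨k, σ⟩ x ∧ patternLE x ⟨k + 2, τ⟩} =
      {⟨k, σ⟩, ⟨k + 1, eraseLetter τ p⟩, ⟨k + 2, τ⟩} := by
  refine Set.ext fun x => ⟨fun hx => ?_, ?_⟩
  · obtain ⟨m, π⟩ := x
    obtain ⟨⟨u, hu : IsOccurrence σ π u⟩, ⟨v, hv' : IsOccurrence π τ v⟩⟩ := hx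
    have hkm : k ≤ m := Fin.le_of_injective u hu.1.injective
    have hmk : m ≤ k + 2 := Fin.le_of_injective v hv'.1.injective
    obtain rfl | rfl | rfl : m = k ∨ m = k + 1 ∨ m = k + 2 := by omega
    · rw [hu.eq]
      exact Or.inl rfl
    · obtain ⟨r, rfl⟩ := Fin.exists_eq_succAbove_of_strictMono hv'.1
      have huv := hu.trans hv'
      -- the occurrence `r.succAbove ∘ u` of `σ` misses `r`, and it misses exactly `{p, q}`
      have hr : r ∈ ({p, q} : Finset (Fin (k + 2))) := by
        rw [← compl_image_eq_of_forall_notMem huv.1.injective (havoid _ huv)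
          (by rw [card_pair hpq.1.ne])]
        simp [Fin.succAbove_ne]
      rw [hv'.perm_eq (isOccurrence_eraseLetter τ r)]
      simp only [mem_insert, mem_singleton] at hr
      rcases hr with rfl | rfl
      · exact Or.inr (Or.inl rfl)
      · rw [eraseLetter_eq_of_covBy hpq hv]
        exact Or.inr (Or.inl rfl)
    · rw [hv'.eq]
      exact Or.inr (Or.inr rfl)
  · obtain ⟨f, hf⟩ := hστ
    rintro (rfl | rfl | rfl)
    · exact ⟨patternLE_refl _, f, hf⟩
    · exact ⟨hf.patternLE_eraseLetter fun i h => havoid f hf i (by simp [h]),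
        _, isOccurrence_eraseLetter τ p⟩
    · exact ⟨⟨f, hf⟩, patternLE_refl _⟩

theorem interval_block_rank_two_chain_general {k n : ℕ}
    (σ : Equiv.Perm (Fin k)) (τ : Equiv.Perm (Fin n))
    (hle : patternLE ⟨k, σ⟩ ⟨n, τ⟩) (hrank : n = k + 2)
    (hblock : ∃ J : Finset (Fin n), IsBlockIn τ Finset.univ J ∧
      ∀ f : Fin k → Fin n, IsOccurrence σ τ f → ∀ i : Fin k, f i ∉ J) :
    ∃ J : Finset (Fin n),
      (IsBlockIn τ Finset.univ J ∧
        ∀ f : Fin k → Fin n, IsOccurrence σ τ f → ∀ i : Fin k, f i ∉ J) ∧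
      (∀ J' : Finset (Fin n),
        (IsBlockIn τ Finset.univ J' ∧
          ∀ f : Fin k → Fin n, IsOccurrence σ τ f → ∀ i : Fin k, f i ∉ J') → J' = J) ∧
      J.card = 2 ∧
      ∃ (ρ : Equiv.Perm (Fin (k + 1))) (g : Fin (k + 1) → Fin n) (p : Fin n),
        p ∈ J ∧ IsOccurrence ρ τ g ∧ Set.range g = {q : Fin n | q ≠ p} ∧
        patternLE ⟨k, σ⟩ ⟨k + 1, ρ⟩ ∧ patternLE ⟨k + 1, ρ⟩ ⟨n, τ⟩ ∧
        (⟨k, σ⟩ : PatternPoset) ≠ ⟨k + 1, ρ⟩ ∧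
        (⟨k + 1, ρ⟩ : PatternPoset) ≠ ⟨n, τ⟩ ∧
        (⟨k, σ⟩ : PatternPoset) ≠ ⟨n, τ⟩ ∧
        {x : PatternPoset | patternLE ⟨k, σ⟩ x ∧ patternLE x ⟨n, τ⟩} =
          {⟨k, σ⟩, ⟨k + 1, ρ⟩, ⟨n, τ⟩} := by
  subst hrank
  obtain ⟨f₀, hf₀⟩ : ∃ f : Fin k → Fin (k + 2), IsOccurrence σ τ f := hle
  obtain ⟨J, hJ, hJavoid⟩ := hblock
  -- a block avoiding `f₀` has at least two letters, all in the two-letter complement of `f₀`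
  have hcompl : ∀ J', IsBlockIn τ univ J' → (∀ i, f₀ i ∉ J') → (univ.image f₀)ᶜ = J' :=
    fun J' hJ' hf₀J' =>
      compl_image_eq_of_forall_notMem hf₀.1.injective hf₀J' (by grind [IsBlockIn])
  have hcard : #J = 2 := by
    rw [← hcompl J hJ (hJavoid f₀ hf₀), card_compl_image_of_injective hf₀.1.injective]
    omega
  obtain ⟨p, q, hpq, rfl⟩ : ∃ p q, p < q ∧ J = {p, q} := by
    obtain ⟨a, b, hab, rfl⟩ := card_eq_two.1 hcard
    rcases hab.lt_or_gt with h | h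
    exacts [⟨a, b, h, rfl⟩, ⟨b, a, h, pair_comm a b⟩]
  have hv : τ p ⋖ τ q ∨ τ q ⋖ τ p := by
    rcases (τ.injective.ne hpq.ne).lt_or_gt with h | h
    exacts [Or.inl (hJ.covBy_of_eq_pair.2 h),
      Or.inr ((pair_comm p q ▸ hJ).covBy_of_eq_pair.2 h)]
  refine ⟨{p, q}, ⟨hJ, hJavoid⟩, fun J' ⟨hJ', hJ'avoid⟩ => ?_, hcard, eraseLetter τ p,
    p.succAbove, p, by simp, isOccurrence_eraseLetter τ p, Fin.range_succAbove p,
    hf₀.patternLE_eraseLetter fun i h => hJavoid f₀ hf₀ i (by simp [h]),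
    ⟨_, isOccurrence_eraseLetter τ p⟩, PatternPoset.ne_of_length_ne (by simp),
    PatternPoset.ne_of_length_ne (by simp), PatternPoset.ne_of_length_ne (by simp),
    patternInterval_eq_of_covBy ⟨f₀, hf₀⟩ (hJ.covBy_of_eq_pair.1 hpq) hv hJavoid⟩
  rw [← hcompl J' hJ' (hJ'avoid f₀ hf₀), hcompl _ hJ (hJavoid f₀ hf₀)]

/-- if `n - k = 2` and the pair `(σ, τ)` has an interval block, then it has
exactly one interval block `I`, which has two elements, and `[σ, τ]` is a three-element
chain whose middle element is obtained from `τ` by removing one of the two letters of `I`. -/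
theorem interval_block_rank_two_chain {k n : ℕ} (hk : 0 < k)
    (σ : Equiv.Perm (Fin k)) (τ : Equiv.Perm (Fin n))
    (hle : patternLE ⟨k, σ⟩ ⟨n, τ⟩) (hrank : n = k + 2)
    (hblock : ∃ J : Finset (Fin n), IsBlockIn τ Finset.univ J ∧
      ∀ f : Fin k → Fin n, IsOccurrence σ τ f → ∀ i : Fin k, f i ∉ J) :
    ∃ J : Finset (Fin n),
      (IsBlockIn τ Finset.univ J ∧
        ∀ f : Fin k → Fin n, IsOccurrence σ τ f → ∀ i : Fin k, f i ∉ J) ∧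
      (∀ J' : Finset (Fin n),
        (IsBlockIn τ Finset.univ J' ∧
          ∀ f : Fin k → Fin n, IsOccurrence σ τ f → ∀ i : Fin k, f i ∉ J') → J' = J) ∧
      J.card = 2 ∧
      ∃ (ρ : Equiv.Perm (Fin (k + 1))) (g : Fin (k + 1) → Fin n) (p : Fin n),
        p ∈ J ∧ IsOccurrence ρ τ g ∧ Set.range g = {q : Fin n | q ≠ p} ∧
        patternLE ⟨k, σ⟩ ⟨k + 1, ρ⟩ ∧ patternLE ⟨k + 1, ρ⟩ ⟨n, τ⟩ ∧
        (⟨k, σ⟩ : PatternPoset) ≠ ⟨k + 1, ρ⟩ ∧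
        (⟨k + 1, ρ⟩ : PatternPoset) ≠ ⟨n, τ⟩ ∧
        (⟨k, σ⟩ : PatternPoset) ≠ ⟨n, τ⟩ ∧
        {x : PatternPoset | patternLE ⟨k, σ⟩ x ∧ patternLE x ⟨n, τ⟩} =
          {⟨k, σ⟩, ⟨k + 1, ρ⟩, ⟨n, τ⟩} :=
  interval_block_rank_two_chain_general σ τ hle hrank hblock
end

section
/- Let σ ∈ S_k and τ ∈ S_n with σ ≤ τ, and let ⟨σ⟩ be an occurrence of σ in τ. If the pair (⟨σ⟩, τ) is separated, then the Möbius function of the occurrence poset [⟨σ⟩, τ] satisfies μ(⟨σ⟩, τ) = (−1)^{n−k}. -/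
/-!
Under separation, two different sets of kept positions never give the same element of the
occurrence poset. An isomorphism between the two patterns is strictly monotone on the marked
occurrence, hence fixes it; so every other kept letter is sent to a letter in the same region
lying on the same side of each occurrence value, and separation forces the two letters to
coincide. The occurrence poset is therefore the boolean lattice of subsets of the `n - k`
unmarked positions, whose Möbius function from bottom to top is `(-1) ^ (n - k)`.
-/

open Finset

theorem Finset.sum_Icc_neg_one_pow_card_sdiff {α : Type*} [DecidableEq α] {s t : Finset α}
    (h : s ⊂ t) : ∑ u ∈ Icc s t, (-1 : ℤ) ^ #(u \ s) = 0 := by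
  have hcancel : ∀ r ∈ (t \ s).powerset, (s ∪ r) \ s = r := fun r hr =>
    union_sdiff_cancel_left (disjoint_of_subset_right (mem_powerset.1 hr) disjoint_sdiff)
  have hinj : Set.InjOn (s ∪ ·) ((t \ s).powerset : Set (Finset α)) := fun r hr r' hr' he => by
    rw [← hcancel r hr, ← hcancel r' hr']
    exact congrArg (· \ s) he
  rw [Icc_eq_image_powerset h.subset, sum_image hinj, sum_congr rfl fun r hr => by
    rw [hcancel r hr]]
  exact sum_powerset_neg_one_pow_card_of_nonempty (sdiff_nonempty.2 h.not_subset)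

/-- The Möbius function of the boolean lattice of finsets above `s`. -/
theorem Finset.eq_neg_one_pow_card_sdiff_of_eq_neg_sum_Ico {α : Type*} [DecidableEq α]
    {s : Finset α} {ν : Finset α → ℤ} (hs : ν s = 1)
    (hrec : ∀ t, s ⊂ t → ν t = -∑ u ∈ Ico s t, ν u) {t : Finset α} (ht : s ⊆ t) :
    ν t = (-1) ^ #(t \ s) := by
  induction t using Finset.strongInduction with
  | H t ih =>
    obtain rfl | hst := ht.eq_or_ssubset
    · simp [hs]
    have hIco : ∑ u ∈ Ico s t, ν u = ∑ u ∈ Ico s t, (-1 : ℤ) ^ #(u \ s) :=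
      sum_congr rfl fun u hu => ih u (mem_Ico.1 hu).2 (mem_Ico.1 hu).1
    have hIcc := sum_Icc_neg_one_pow_card_sdiff hst
    rw [← Ico_insert_right ht, sum_insert right_notMem_Ico] at hIcc
    rw [hrec t hst, hIco]
    linarith

section Separated

variable {n : ℕ} {τ : Equiv.Perm (Fin n)} {A : Finset (Fin n)}

theorem SameRegion.symm {p q : Fin n} (h : SameRegion A p q) : SameRegion A q p := by
  intro z hz hz'
  exact h z (min_comm p q ▸ hz) (max_comm p q ▸ hz')

theorem sameRegion_of_forall_lt_iff {p q : Fin n} (hp : p ∉ A) (hq : q ∉ A)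
    (h : ∀ a ∈ A, p < a ↔ q < a) : SameRegion A p q := by
  intro z hz hz' hzA
  have hpz : p ≠ z := fun e => hp (e ▸ hzA)
  have hqz : q ≠ z := fun e => hq (e ▸ hzA)
  rcases le_total p q with hpq | hqp
  · rw [min_eq_left hpq] at hz
    rw [max_eq_right hpq] at hz'
    exact (lt_of_le_of_ne hz' hqz.symm).not_gt ((h z hzA).1 (lt_of_le_of_ne hz hpz))
  · rw [min_eq_right hqp] at hz
    rw [max_eq_left hqp] at hz'
    exact (lt_of_le_of_ne hz' hpz.symm).not_gt ((h z hzA).2 (lt_of_le_of_ne hz hqz))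

theorem Separated.eq_of_sameRegion (hsep : Separated τ A) {p q : Fin n}
    (hpq : SameRegion A p q) (h : ∀ a ∈ A, τ p < τ a ↔ τ q < τ a) : p = q := by
  by_contra hne
  rcases lt_or_gt_of_ne (τ.injective.ne hne) with hlt | hlt
  · obtain ⟨a, ha, hpa, haq⟩ := hsep p q hpq hlt
    exact haq.not_gt ((h a ha).1 hpa)
  · obtain ⟨a, ha, hqa, hap⟩ := hsep q p hpq.symm hlt
    exact hap.not_gt ((h a ha).2 hqa)

theorem Separated.eq_of_occEquiv (hsep : Separated τ A) {S S' : Finset (Fin n)} (hS : A ⊆ S)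
    (h : OccEquiv τ A S S') : S = S' := by
  have hcard := h.card_eq
  obtain ⟨g, hval, hmem⟩ := h
  have hfixA : ∀ s : {x // x ∈ S}, s.1 ∈ A → (g s).1 = s.1 := by
    let gA : {x // x ∈ A} → {x // x ∈ A} := fun a => ⟨g ⟨a, hS a.2⟩, (hmem _).1 a.2⟩
    have hgA : StrictMono gA := fun a b hab => g.strictMono (Subtype.mk_lt_mk.2 hab)
    intro s hs
    exact congrArg Subtype.val (hgA.apply_eq (x := ⟨s.1, hs⟩))
  have hfix : ∀ s : {x // x ∈ S}, (g s).1 = s.1 := by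
    intro s
    by_cases hs : s.1 ∈ A
    · exact hfixA s hs
    have hga : ∀ a (ha : a ∈ A), (g ⟨a, hS ha⟩).1 = a := fun a ha => hfixA ⟨a, hS ha⟩ ha
    refine (hsep.eq_of_sameRegion (sameRegion_of_forall_lt_iff hs (mt (hmem s).2 hs) ?_) ?_).symm
    · intro a ha
      nth_rw 2 [← hga a ha]
      exact (g.lt_iff_lt (x := s) (y := ⟨a, hS ha⟩)).symm
    · intro a ha
      nth_rw 2 [← hga a ha]
      exact hval s ⟨a, hS ha⟩
  have hsub : S ⊆ S' := fun x hx => by simpa [hfix] using (g ⟨x, hx⟩).2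
  exact eq_of_subset_of_card_le hsub hcard.ge

theorem Separated.occMk_injective (hsep : Separated τ A) {U : Finset (Fin n)} :
    Function.Injective (occMk τ A U) := fun S S' h =>
  (Equivalence.eqvGen_iff eq_equivalence).1 <|
    Relation.EqvGen.mono (p := Eq)
      (fun (T _ : OccCarrier A U) hT => Subtype.ext (hsep.eq_of_occEquiv T.2.1 hT)) S S'
      (Quot.eqvGen_exact h)

theorem Separated.occLE_occMk_iff (hsep : Separated τ A) {U : Finset (Fin n)}
    {S S' : OccCarrier A U} : occLE τ A U (occMk τ A U S) (occMk τ A U S') ↔ S.1 ⊆ S'.1 := by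
  constructor
  · rintro ⟨T, T', hT, hT', hTT'⟩
    rwa [hsep.occMk_injective hT, hsep.occMk_injective hT']
  · exact fun h => ⟨S, S', rfl, rfl, h⟩

def occMkUnion (τ : Equiv.Perm (Fin n)) (A T : Finset (Fin n)) : OccPoset τ A univ :=
  occMk τ A univ ⟨A ∪ T, subset_union_left, subset_univ _⟩

theorem occMkUnion_of_subset {T : Finset (Fin n)} (hT : A ⊆ T) :
    occMkUnion τ A T = occMk τ A univ (⟨T, hT, subset_univ T⟩ : OccCarrier A univ) := by
  simp only [occMkUnion, union_eq_right.2 hT]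

theorem exists_occMkUnion_eq (q : OccPoset τ A univ) : ∃ T, A ⊆ T ∧ occMkUnion τ A T = q := by
  obtain ⟨S, rfl⟩ := Quot.exists_rep q
  exact ⟨S.1, S.2.1, occMkUnion_of_subset S.2.1⟩

theorem Separated.occMkUnion_injOn (hsep : Separated τ A) :
    Set.InjOn (occMkUnion τ A) {T | A ⊆ T} := fun T hT T' hT' h => by
  rw [occMkUnion_of_subset hT, occMkUnion_of_subset hT'] at h
  exact congrArg Subtype.val (hsep.occMk_injective h)

theorem Separated.occLE_occMkUnion_iff (hsep : Separated τ A) {T T' : Finset (Fin n)}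
    (hT : A ⊆ T) (hT' : A ⊆ T') :
    occLE τ A univ (occMkUnion τ A T) (occMkUnion τ A T') ↔ T ⊆ T' := by
  rw [occMkUnion_of_subset hT, occMkUnion_of_subset hT']
  exact hsep.occLE_occMk_iff

theorem Separated.setOf_occLE_and_ne_eq_image_Ico (hsep : Separated τ A) {S : Finset (Fin n)}
    (hS : A ⊆ S) :
    {x | occLE τ A univ (occMkUnion τ A A) x ∧ occLE τ A univ x (occMkUnion τ A S) ∧
      x ≠ occMkUnion τ A S} = occMkUnion τ A '' ↑(Ico A S) := by
  ext x
  obtain ⟨T, hT, rfl⟩ := exists_occMkUnion_eq x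
  simp only [Set.mem_ofPred_eq, Set.mem_image, mem_coe,
    hsep.occLE_occMkUnion_iff subset_rfl hT, hsep.occLE_occMkUnion_iff hT hS]
  constructor
  · rintro ⟨hAT, hTS, hne⟩
    exact ⟨T, mem_Ico.2 ⟨hAT, ssubset_of_subset_of_ne hTS fun h => hne (h ▸ rfl)⟩, rfl⟩
  · rintro ⟨T', hT', he⟩
    obtain ⟨hAT, hTS⟩ := mem_Ico.1 hT'
    obtain rfl := hsep.occMkUnion_injOn hAT hT he
    exact ⟨hAT, hTS.subset, fun h => hTS.ne (hsep.occMkUnion_injOn hT hS h)⟩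

end Separated

theorem mobius_occurrence_poset_separated_general {k n : ℕ}
    (σ : Equiv.Perm (Fin k)) (τ : Equiv.Perm (Fin n))
    (f : Fin k → Fin n) (hf : IsOccurrence σ τ f)
    (A : Finset (Fin n)) (hA : A = Finset.image f Finset.univ)
    (hsep : Separated τ A)
    (mu : OccPoset τ A Finset.univ → OccPoset τ A Finset.univ → ℤ)
    (hone : ∀ q, mu q q = 1)
    (hrec : ∀ q q', occLE τ A Finset.univ q q' → q ≠ q' →
      mu q q' = - ∑ᶠ x ∈ {x : OccPoset τ A Finset.univ |
        occLE τ A Finset.univ q x ∧ occLE τ A Finset.univ x q' ∧ x ≠ q'}, mu q x) :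
    mu (occBot τ A Finset.univ (Finset.subset_univ A))
      (occTop τ A Finset.univ (Finset.subset_univ A)) = (-1 : ℤ) ^ (n - k) := by
  have hcard : #A = k := by
    rw [hA, card_image_of_injective _ hf.1.injective, card_univ, Fintype.card_fin]
  have hbot : occBot τ A univ (subset_univ A) = occMkUnion τ A A :=
    (occMkUnion_of_subset subset_rfl).symm
  have htop : occTop τ A univ (subset_univ A) = occMkUnion τ A univ :=
    (occMkUnion_of_subset (subset_univ A)).symm
  have hmobius : ∀ S, A ⊂ S →
      mu (occMkUnion τ A A) (occMkUnion τ A S) =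
        -∑ T ∈ Ico A S, mu (occMkUnion τ A A) (occMkUnion τ A T) := by
    intro S hAS
    have hle := (hsep.occLE_occMkUnion_iff (subset_refl A) hAS.subset).2 hAS.subset
    have hne := fun h => hAS.ne (hsep.occMkUnion_injOn (subset_refl A) hAS.subset h)
    rw [hrec _ _ hle hne, hsep.setOf_occLE_and_ne_eq_image_Ico hAS.subset,
      finsum_mem_image fun T hT T' hT' => hsep.occMkUnion_injOn (mem_Ico.1 hT).1 (mem_Ico.1 hT').1,
      finsum_mem_coe_finset]
  rw [hbot, htop, eq_neg_one_pow_card_sdiff_of_eq_neg_sum_Ico (hone _) hmobius (subset_univ A),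
    card_univ_sdiff, Fintype.card_fin, hcard]

/-- if the pair `(⟨σ⟩, τ)` is separated then the Möbius function of the
occurrence poset `[⟨σ⟩, τ]` satisfies `μ(⟨σ⟩, τ) = (-1) ^ (n - k)`. -/
theorem mobius_occurrence_poset_separated {k n : ℕ}
    (σ : Equiv.Perm (Fin k)) (τ : Equiv.Perm (Fin n))
    (f : Fin k → Fin n) (hf : IsOccurrence σ τ f)
    (A : Finset (Fin n)) (hA : A = Finset.image f Finset.univ)
    (hsep : Separated τ A)
    (mu : OccPoset τ A Finset.univ → OccPoset τ A Finset.univ → ℤ)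
    (hone : ∀ q, mu q q = 1)
    (hzero : ∀ q q', ¬ occLE τ A Finset.univ q q' → mu q q' = 0)
    (hrec : ∀ q q', occLE τ A Finset.univ q q' → q ≠ q' →
      mu q q' = - ∑ᶠ x ∈ {x : OccPoset τ A Finset.univ |
        occLE τ A Finset.univ q x ∧ occLE τ A Finset.univ x q' ∧ x ≠ q'}, mu q x) :
    mu (occBot τ A Finset.univ (Finset.subset_univ A))
      (occTop τ A Finset.univ (Finset.subset_univ A)) = (-1 : ℤ) ^ (n - k) :=
  mobius_occurrence_poset_separated_general σ τ f hf A hA hsep mu hone hrec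
end

section
/- Let σ ∈ S_k and τ ∈ S_n with k < n, let ⟨σ⟩ be an occurrence of σ in τ, and suppose the complement τ ∖ ⟨σ⟩ consists entirely of a single group of m ≥ 2 pairwise similar letters (so n − k = m). Then the interval-free subposet I(⟨σ⟩, τ) consists of exactly two elements: the element ⟨σ⟩ and the element obtained by adding to ⟨σ⟩ a single letter of τ ∖ ⟨σ⟩; in particular I(⟨σ⟩, τ) has the rank property. -/
section Aux

variable {n : ℕ} {τ : Equiv.Perm (Fin n)} {A : Finset (Fin n)}

lemma aux_pos
    (hsim : ∀ p ∈ Finset.univ \ A, ∀ q ∈ Finset.univ \ A, τ p < τ q → SimilarPos τ A p q)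
    {a c c' : Fin n} (ha : a ∈ A) (hc : c ∉ A) (hc' : c' ∉ A)
    (hlt : a < c) : a < c' := by
  by_contra h
  push_neg at h
  have hne : c' ≠ a := fun e => hc' (e ▸ ha)
  have h1 : c' < a := lt_of_le_of_ne h hne
  have hcc : c ≠ c' := fun e => absurd hlt (not_lt.mpr (e ▸ h))
  have hmc : c ∈ Finset.univ \ A := Finset.mem_sdiff.mpr ⟨Finset.mem_univ _, hc⟩
  have hmc' : c' ∈ Finset.univ \ A := Finset.mem_sdiff.mpr ⟨Finset.mem_univ _, hc'⟩
  have hne2 : τ c ≠ τ c' := fun e => hcc (τ.injective e)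
  have hnotA : a ∉ A := by
    rcases hne2.lt_or_gt with h' | h'
    · exact (hsim c hmc c' hmc' h').1 a (le_trans (min_le_right _ _) h1.le)
        (le_trans hlt.le (le_max_left _ _))
    · exact (hsim c' hmc' c hmc h').1 a (le_trans (min_le_left _ _) h1.le)
        (le_trans hlt.le (le_max_right _ _))
  exact hnotA ha

lemma aux_val
    (hsim : ∀ p ∈ Finset.univ \ A, ∀ q ∈ Finset.univ \ A, τ p < τ q → SimilarPos τ A p q)
    {a c c' : Fin n} (ha : a ∈ A) (hc : c ∉ A) (hc' : c' ∉ A)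
    (hlt : τ a < τ c) : τ a < τ c' := by
  by_contra h
  push_neg at h
  have hne : τ c' ≠ τ a := fun e => hc' ((τ.injective e) ▸ ha)
  have h1 : τ c' < τ a := lt_of_le_of_ne h hne
  have hmc : c ∈ Finset.univ \ A := Finset.mem_sdiff.mpr ⟨Finset.mem_univ _, hc⟩
  have hmc' : c' ∈ Finset.univ \ A := Finset.mem_sdiff.mpr ⟨Finset.mem_univ _, hc'⟩
  exact (hsim c' hmc' c hmc (h1.trans hlt)).2.2 a ha ⟨h1, hlt⟩

lemma aux_block {S : Finset (Fin n)}
    (hsim : ∀ p ∈ Finset.univ \ A, ∀ q ∈ Finset.univ \ A, τ p < τ q → SimilarPos τ A p q)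
    (h2 : 2 ≤ (S \ A).card) : PairHasBlock τ A S := by
  refine ⟨S \ A, ⟨Finset.sdiff_subset, h2, ?_, ?_⟩, fun p hp => (Finset.mem_sdiff.mp hp).2⟩
  · intro x hx y hy z hz hxz hzy
    have hxA := (Finset.mem_sdiff.mp hx).2
    have hyA := (Finset.mem_sdiff.mp hy).2
    refine Finset.mem_sdiff.mpr ⟨hz, ?_⟩
    rcases eq_or_ne x y with rfl | hxy
    · have hzx : z = x := le_antisymm hzy hxz
      exact hzx ▸ hxA
    · have hmx : x ∈ Finset.univ \ A := Finset.mem_sdiff.mpr ⟨Finset.mem_univ _, hxA⟩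
      have hmy : y ∈ Finset.univ \ A := Finset.mem_sdiff.mpr ⟨Finset.mem_univ _, hyA⟩
      have hne2 : τ x ≠ τ y := fun e => hxy (τ.injective e)
      rcases hne2.lt_or_gt with h' | h'
      · exact (hsim x hmx y hmy h').1 z (le_trans (min_le_left _ _) hxz)
          (le_trans hzy (le_max_right _ _))
      · exact (hsim y hmy x hmx h').1 z (le_trans (min_le_right _ _) hxz)
          (le_trans hzy (le_max_left _ _))
  · intro x hx y hy z hz hxz hzy
    refine Finset.mem_sdiff.mpr ⟨hz, fun hzA => ?_⟩
    have hxA := (Finset.mem_sdiff.mp hx).2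
    have hyA := (Finset.mem_sdiff.mp hy).2
    have h1 : τ x < τ z := lt_of_le_of_ne hxz (fun e => hxA (by rw [τ.injective e]; exact hzA))
    have h2' : τ z < τ y := lt_of_le_of_ne hzy (fun e => hyA (by rw [← τ.injective e]; exact hzA))
    have hmx : x ∈ Finset.univ \ A := Finset.mem_sdiff.mpr ⟨Finset.mem_univ _, hxA⟩
    have hmy : y ∈ Finset.univ \ A := Finset.mem_sdiff.mpr ⟨Finset.mem_univ _, hyA⟩
    exact (hsim x hmx y hmy (h1.trans h2')).2.2 z hzA ⟨h1, h2'⟩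

lemma aux_equiv
    (hsim : ∀ p ∈ Finset.univ \ A, ∀ q ∈ Finset.univ \ A, τ p < τ q → SimilarPos τ A p q)
    {p p' : Fin n} (hp : p ∉ A) (hp' : p' ∉ A) :
    OccEquiv τ A (insert p A) (insert p' A) := by
  classical
  have hposlt : ∀ a ∈ A, ∀ c c' : Fin n, c ∉ A → c' ∉ A → (a < c ↔ a < c') :=
    fun a ha c c' hc hc' =>
      ⟨fun h => aux_pos hsim ha hc hc' h, fun h => aux_pos hsim ha hc' hc h⟩
  have hposgt : ∀ a ∈ A, ∀ c c' : Fin n, c ∉ A → c' ∉ A → (c < a ↔ c' < a) := by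
    intro a ha c c' hc hc'
    have hac : a ≠ c := fun e => hc (e ▸ ha)
    have hac' : a ≠ c' := fun e => hc' (e ▸ ha)
    rw [← not_le, ← not_le]
    apply not_congr
    constructor
    · intro h
      exact ((hposlt a ha c c' hc hc').mp (lt_of_le_of_ne h hac)).le
    · intro h
      exact ((hposlt a ha c c' hc hc').mpr (lt_of_le_of_ne h hac')).le
  have hvallt : ∀ a ∈ A, ∀ c c' : Fin n, c ∉ A → c' ∉ A → (τ a < τ c ↔ τ a < τ c') :=
    fun a ha c c' hc hc' =>
      ⟨fun h => aux_val hsim ha hc hc' h, fun h => aux_val hsim ha hc' hc h⟩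
  have hvalgt : ∀ a ∈ A, ∀ c c' : Fin n, c ∉ A → c' ∉ A → (τ c < τ a ↔ τ c' < τ a) := by
    intro a ha c c' hc hc'
    have hac : τ a ≠ τ c := fun e => hc ((τ.injective e) ▸ ha)
    have hac' : τ a ≠ τ c' := fun e => hc' ((τ.injective e) ▸ ha)
    rw [← not_le, ← not_le]
    apply not_congr
    constructor
    · intro h
      exact ((hvallt a ha c c' hc hc').mp (lt_of_le_of_ne h hac)).le
    · intro h
      exact ((hvallt a ha c c' hc hc').mpr (lt_of_le_of_ne h hac')).le
  have key : ∀ x y : Fin n, x ∈ insert p A → y ∈ insert p A →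
      ((if x = p then p' else x) < (if y = p then p' else y) ↔ x < y) := by
    intro x y hx hy
    by_cases hxp : x = p <;> by_cases hyp : y = p
    · simp [hxp, hyp]
    · have hyA : y ∈ A := (Finset.mem_insert.mp hy).resolve_left hyp
      simp only [if_pos hxp, if_neg hyp, hxp]
      exact (hposgt y hyA p p' hp hp').symm
    · have hxA : x ∈ A := (Finset.mem_insert.mp hx).resolve_left hxp
      simp only [if_neg hxp, if_pos hyp, hyp]
      exact (hposlt x hxA p p' hp hp').symm
    · simp [hxp, hyp]
  have keyτ : ∀ x y : Fin n, x ∈ insert p A → y ∈ insert p A →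
      (τ (if x = p then p' else x) < τ (if y = p then p' else y) ↔ τ x < τ y) := by
    intro x y hx hy
    by_cases hxp : x = p <;> by_cases hyp : y = p
    · simp [hxp, hyp]
    · have hyA : y ∈ A := (Finset.mem_insert.mp hy).resolve_left hyp
      simp only [if_pos hxp, if_neg hyp, hxp]
      exact (hvalgt y hyA p p' hp hp').symm
    · have hxA : x ∈ A := (Finset.mem_insert.mp hx).resolve_left hxp
      simp only [if_neg hxp, if_pos hyp, hyp]
      exact (hvallt x hxA p p' hp hp').symm
    · simp [hxp, hyp]
  have mem1 : ∀ x : Fin n, x ∈ insert p A → (if x = p then p' else x) ∈ insert p' A := by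
    intro x hx
    split
    · exact Finset.mem_insert_self _ _
    · next h => exact Finset.mem_insert_of_mem ((Finset.mem_insert.mp hx).resolve_left h)
  have mem2 : ∀ x : Fin n, x ∈ insert p' A → (if x = p' then p else x) ∈ insert p A := by
    intro x hx
    split
    · exact Finset.mem_insert_self _ _
    · next h => exact Finset.mem_insert_of_mem ((Finset.mem_insert.mp hx).resolve_left h)
  refine ⟨⟨⟨fun x => ⟨if x.1 = p then p' else x.1, mem1 x.1 x.2⟩,
      fun x => ⟨if x.1 = p' then p else x.1, mem2 x.1 x.2⟩, ?_, ?_⟩, ?_⟩, ?_, ?_⟩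
  · intro x
    apply Subtype.ext
    dsimp only
    by_cases h : x.1 = p
    · simp [h]
    · have hA : x.1 ∈ A := (Finset.mem_insert.mp x.2).resolve_left h
      have h2 : x.1 ≠ p' := fun e => hp' (e ▸ hA)
      simp [h, h2]
  · intro x
    apply Subtype.ext
    dsimp only
    by_cases h : x.1 = p'
    · simp [h]
    · have hA : x.1 ∈ A := (Finset.mem_insert.mp x.2).resolve_left h
      have h2 : x.1 ≠ p := fun e => hp (e ▸ hA)
      simp [h, h2]
  · intro a b
    show (⟨_, _⟩ : {x // x ∈ insert p' A}) ≤ ⟨_, _⟩ ↔ a ≤ b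
    rw [Subtype.mk_le_mk, ← Subtype.coe_le_coe, ← not_lt, ← not_lt]
    exact not_congr (key b.1 a.1 b.2 a.2)
  · intro a b
    exact (keyτ a.1 b.1 a.2 b.2).symm
  · intro a
    show a.1 ∈ A ↔ (if a.1 = p then p' else a.1) ∈ A
    by_cases h : a.1 = p
    · rw [if_pos h, h]
      exact ⟨fun hh => absurd hh hp, fun hh => absurd hh hp'⟩
    · rw [if_neg h]

end Aux

/-- if the complement `τ ∖ ⟨σ⟩` consists of a single group of `m ≥ 2`
pairwise similar letters (`n - k = m`), then the interval-free subposet `I(⟨σ⟩, τ)`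
consists of exactly two elements, `⟨σ⟩` and the element obtained by adding to `⟨σ⟩` a
single letter of `τ ∖ ⟨σ⟩`; in particular it has the rank property. -/
theorem interval_free_subposet_single_group {k n m : ℕ} (hkn : k < n) (hm : 2 ≤ m)
    (hnk : n = k + m)
    (σ : Equiv.Perm (Fin k)) (τ : Equiv.Perm (Fin n))
    (f : Fin k → Fin n) (hf : IsOccurrence σ τ f)
    (A : Finset (Fin n)) (hA : A = Finset.image f Finset.univ)
    (hcard : (Finset.univ \ A).card = m)
    (hsim : ∀ p ∈ Finset.univ \ A, ∀ q ∈ Finset.univ \ A, τ p < τ q → SimilarPos τ A p q) :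
    (∃ w : OccPoset τ A Finset.univ,
      {q : OccPoset τ A Finset.univ | occIntervalFree τ A Finset.univ q} =
        {occBot τ A Finset.univ (Finset.subset_univ A), w} ∧
      w ≠ occBot τ A Finset.univ (Finset.subset_univ A) ∧
      ∀ p : Fin n, p ∉ A →
        occMk τ A Finset.univ ⟨insert p A, Finset.subset_insert p A, Finset.subset_univ _⟩ = w) ∧
    Nat.card {q : OccPoset τ A Finset.univ //
      occIntervalFree τ A Finset.univ q ∧ Even (occRank τ A Finset.univ k q)} =
    Nat.card {q : OccPoset τ A Finset.univ //
      occIntervalFree τ A Finset.univ q ∧ Odd (occRank τ A Finset.univ k q)} := by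
  classical
  have hC : 0 < (Finset.univ \ A).card := by omega
  obtain ⟨p₀, hp₀mem⟩ := Finset.card_pos.mp hC
  have hp₀ : p₀ ∉ A := (Finset.mem_sdiff.mp hp₀mem).2
  set bot := occBot τ A Finset.univ (Finset.subset_univ A) with hbotdef
  set w := occMk τ A Finset.univ
    ⟨insert p₀ A, Finset.subset_insert p₀ A, Finset.subset_univ _⟩ with hwdef
  have hAcard : A.card = k := by
    rw [hA, Finset.card_image_of_injective _ hf.1.injective, Finset.card_univ,
      Fintype.card_fin]
  have hw : ∀ p : Fin n, p ∉ A →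
      occMk τ A Finset.univ ⟨insert p A, Finset.subset_insert p A, Finset.subset_univ _⟩ = w :=
    fun p hp => Quot.sound (aux_equiv hsim hp hp₀)
  have hbotfree : occIntervalFree τ A Finset.univ bot := by
    refine ⟨⟨A, subset_rfl, Finset.subset_univ A⟩, rfl, ?_⟩
    rintro ⟨J, ⟨hJS, hJ2, -, -⟩, hJA⟩
    obtain ⟨x, hx⟩ := Finset.card_pos.mp (by omega : 0 < J.card)
    exact hJA x hx (hJS hx)
  have hwfree : occIntervalFree τ A Finset.univ w := by
    refine ⟨⟨insert p₀ A, Finset.subset_insert p₀ A, Finset.subset_univ _⟩, rfl, ?_⟩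
    rintro ⟨J, ⟨hJS, hJ2, -, -⟩, hJA⟩
    have hsub : J ⊆ {p₀} := by
      intro x hx
      rcases Finset.mem_insert.mp (hJS hx) with h | h
      · exact Finset.mem_singleton.mpr h
      · exact absurd h (hJA x hx)
    have := Finset.card_le_card hsub
    simp only [Finset.card_singleton] at this
    omega
  have hset : {q : OccPoset τ A Finset.univ | occIntervalFree τ A Finset.univ q} =
      {bot, w} := by
    ext q
    simp only [Set.mem_setOf_eq, Set.mem_insert_iff, Set.mem_singleton_iff]
    constructor
    · rintro ⟨S, rfl, hnb⟩
      have hcard1 : (S.1 \ A).card ≤ 1 := by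
        by_contra h
        push_neg at h
        exact hnb (aux_block hsim h)
      rcases Nat.le_one_iff_eq_zero_or_eq_one.mp hcard1 with h0 | h1
      · left
        have hsub : S.1 ⊆ A := by
          rw [← Finset.sdiff_eq_empty_iff_subset]
          exact Finset.card_eq_zero.mp h0
        have hSA : S = ⟨A, subset_rfl, Finset.subset_univ A⟩ :=
          Subtype.ext (Finset.Subset.antisymm hsub S.2.1)
        rw [hSA]
        rfl
      · right
        obtain ⟨p, hpv⟩ := Finset.card_eq_one.mp h1
        have hpmem : p ∈ S.1 \ A := hpv ▸ Finset.mem_singleton_self p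
        have hpS : p ∈ S.1 := (Finset.mem_sdiff.mp hpmem).1
        have hpA : p ∉ A := (Finset.mem_sdiff.mp hpmem).2
        have hS1 : S.1 = insert p A := by
          ext x
          simp only [Finset.mem_insert]
          constructor
          · intro hx
            by_cases hxA : x ∈ A
            · exact Or.inr hxA
            · have : x ∈ S.1 \ A := Finset.mem_sdiff.mpr ⟨hx, hxA⟩
              rw [hpv] at this
              exact Or.inl (Finset.mem_singleton.mp this)
          · rintro (rfl | hxA)
            · exact hpS
            · exact S.2.1 hxA
        have hSA : S = ⟨insert p A, Finset.subset_insert p A, Finset.subset_univ _⟩ :=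
          Subtype.ext hS1
        rw [hSA]
        exact hw p hpA
    · rintro (rfl | rfl)
      · exact hbotfree
      · exact hwfree
  have hrb : occRank τ A Finset.univ k bot = 0 := by
    show A.card - k = 0
    omega
  have hrw : occRank τ A Finset.univ k w = 1 := by
    show (insert p₀ A).card - k = 1
    rw [Finset.card_insert_of_notMem hp₀]
    omega
  have hne : w ≠ bot := by
    intro h
    rw [h, hrb] at hrw
    exact one_ne_zero hrw.symm
  have hmem : ∀ q : OccPoset τ A Finset.univ,
      occIntervalFree τ A Finset.univ q → q = bot ∨ q = w := by
    intro q hq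
    have : q ∈ ({bot, w} : Set (OccPoset τ A Finset.univ)) :=
      (Set.ext_iff.mp hset q).mp hq
    simpa using this
  have heven : ∀ q : OccPoset τ A Finset.univ,
      (occIntervalFree τ A Finset.univ q ∧ Even (occRank τ A Finset.univ k q)) ↔ q = bot := by
    intro q
    constructor
    · rintro ⟨hfree, hev⟩
      rcases hmem q hfree with rfl | rfl
      · rfl
      · rw [hrw] at hev
        exact absurd hev (by decide)
    · rintro rfl
      exact ⟨hbotfree, by rw [hrb]; exact Even.zero⟩
  have hodd : ∀ q : OccPoset τ A Finset.univ,
      (occIntervalFree τ A Finset.univ q ∧ Odd (occRank τ A Finset.univ k q)) ↔ q = w := by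
    intro q
    constructor
    · rintro ⟨hfree, hod⟩
      rcases hmem q hfree with rfl | rfl
      · rw [hrb] at hod
        exact absurd hod (by decide)
      · rfl
    · rintro rfl
      exact ⟨hwfree, by rw [hrw]; exact odd_one⟩
  have huniq : ∀ x : OccPoset τ A Finset.univ,
      Nat.card {q : OccPoset τ A Finset.univ // q = x} = 1 := by
    intro x
    have : Unique {q : OccPoset τ A Finset.univ // q = x} :=
      { default := ⟨x, rfl⟩, uniq := fun y => Subtype.ext y.2 }
    exact Nat.card_unique
  refine ⟨⟨w, hset, hne, hw⟩, ?_⟩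
  rw [Nat.card_congr (Equiv.subtypeEquivRight heven),
    Nat.card_congr (Equiv.subtypeEquivRight hodd), huniq, huniq]
end
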